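/- arXiv:2512.12582 — 9 statements merged into one kernel-verified Lean document; each statement's English description precedes it below -/
import Mathlib

section
/- Assume d_A ≠ 0. For every α_B ∈ [0,1), the function α ↦ L_A(α, α_B) has a unique minimizer α_A*(α_B) on [0,1). Moreover, α_A*(α_B) = 0 if and only if p ≥ d_A² − λ(α_B)·d_A·d_B/2; otherwise α_A*(α_B) is the unique solution α ∈ (0,1) of the first-order condition f_A(α) = h_A(α_B). -/
open Set Filter

/-- Team decision formed by the two digital representatives. -/
noncomputable def teamDec (lam : ℝ → ℝ) (thA thB mu : ℝ) (aA aB : ℝ) : ℝ :=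
  (lam aA * thA + (1 - lam aA) * mu + lam aB * thB + (1 - lam aB) * mu) / 2

/-- Alice's total loss: preference loss plus communication cost. -/
noncomputable def lossA (lam c : ℝ → ℝ) (thA thB mu : ℝ) (aA aB : ℝ) : ℝ :=
  (thA - teamDec lam thA thB mu aA aB) ^ 2 + c aA

/-- Bob's total loss: preference loss plus communication cost. -/
noncomputable def lossB (lam c : ℝ → ℝ) (thA thB mu : ℝ) (aA aB : ℝ) : ℝ :=
  (thB - teamDec lam thA thB mu aA aB) ^ 2 + c aB

/-- The function `f_m(α) = λ(α) + (2/d_m²)·c'(α)/λ'(α)`. -/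
noncomputable def fFun (lam lam' c' : ℝ → ℝ) (d : ℝ) (α : ℝ) : ℝ :=
  lam α + (2 / d ^ 2) * (c' α / lam' α)

/-- The function `h_m(α) = 2 − λ(α)·d_{−m}/d_m`. -/
noncomputable def hFun (lam : ℝ → ℝ) (dm dOther : ℝ) (α : ℝ) : ℝ :=
  2 - lam α * dOther / dm

/-- `a` is a best response of Alice to Bob's revelation `aB`:
it minimizes `α ↦ L_A(α, aB)` over `[0,1)`. -/
def IsBestRespA (lam c : ℝ → ℝ) (thA thB mu : ℝ) (a aB : ℝ) : Prop :=
  a ∈ Set.Ico (0:ℝ) 1 ∧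
    ∀ x ∈ Set.Ico (0:ℝ) 1, lossA lam c thA thB mu a aB ≤ lossA lam c thA thB mu x aB

/-- Nash equilibrium of the digital representative game. -/
def IsNashEq (lam c : ℝ → ℝ) (thA thB mu : ℝ) (aA aB : ℝ) : Prop :=
  aA ∈ Set.Ico (0:ℝ) 1 ∧ aB ∈ Set.Ico (0:ℝ) 1 ∧
  (∀ α ∈ Set.Ico (0:ℝ) 1, lossA lam c thA thB mu aA aB ≤ lossA lam c thA thB mu α aB) ∧
  (∀ α ∈ Set.Ico (0:ℝ) 1, lossB lam c thA thB mu aA aB ≤ lossB lam c thA thB mu aA α)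

/-- For every `α_B ∈ [0,1)`, the map `α ↦ L_A(α, α_B)` has a unique minimizer
`α_A*(α_B)` on `[0,1)`; moreover `α_A*(α_B) = 0` iff `p ≥ d_A² − λ(α_B)·d_A·d_B/2`, and otherwise
`α_A*(α_B)` is the unique solution in `(0,1)` of `f_A(α) = h_A(α_B)`. -/
theorem bestRespA_unique_and_characterization
    (lam lam' c c' : ℝ → ℝ)
    (hlamDeriv : ∀ α ∈ Set.Icc (0:ℝ) 1, HasDerivAt lam (lam' α) α)
    (hlam'Cont : ContinuousOn lam' (Set.Icc (0:ℝ) 1))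
    (hlam0 : lam 0 = 0) (hlam1 : lam 1 = 1)
    (hlam'pos : ∀ α ∈ Set.Icc (0:ℝ) 1, 0 < lam' α)
    (hlam'anti : ∀ x ∈ Set.Icc (0:ℝ) 1, ∀ y ∈ Set.Icc (0:ℝ) 1, x ≤ y → lam' y ≤ lam' x)
    (hcDeriv : ∀ α ∈ Set.Ico (0:ℝ) 1, HasDerivAt c (c' α) α)
    (hc'Cont : ContinuousOn c' (Set.Ico (0:ℝ) 1))
    (hc0 : c 0 = 0)
    (hc'nonneg : ∀ α ∈ Set.Ico (0:ℝ) 1, 0 ≤ c' α)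
    (hc'strictMono : ∀ x ∈ Set.Ico (0:ℝ) 1, ∀ y ∈ Set.Ico (0:ℝ) 1, x < y → c' x < c' y)
    (hc'top : Filter.Tendsto c' (nhdsWithin 1 (Set.Iio 1)) Filter.atTop)
    (thA thB muG dA dB : ℝ)
    (hdA : dA = thA - muG) (hdB : dB = thB - muG)
    (hdAne : dA ≠ 0) :
    ∀ aB ∈ Set.Ico (0:ℝ) 1,
      (∃! a, IsBestRespA lam c thA thB muG a aB) ∧
      ∀ a, IsBestRespA lam c thA thB muG a aB →
        ((a = 0 ↔ c' 0 / lam' 0 ≥ dA ^ 2 - lam aB * dA * dB / 2) ∧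
         (a ≠ 0 →
           a ∈ Set.Ioo (0:ℝ) 1 ∧
           fFun lam lam' c' dA a = hFun lam dA dB aB ∧
           ∀ x ∈ Set.Ioo (0:ℝ) 1, fFun lam lam' c' dA x = hFun lam dA dB aB → x = a)) := by
  intro aB haB
  obtain ⟨haB0, haB1⟩ := haB
  have hdA2 : (0:ℝ) < dA ^ 2 := by positivity
  set G : ℝ → ℝ := fun α => (dA * (2 - lam α) - lam aB * dB) ^ 2 / 4 + c α with hG
  set φ : ℝ → ℝ := fun α => fFun lam lam' c' dA α - hFun lam dA dB aB with hphi
  have h01 : (0:ℝ) ∈ Set.Icc (0:ℝ) 1 := ⟨le_refl 0, by norm_num⟩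
  have h01' : (0:ℝ) ∈ Set.Ico (0:ℝ) 1 := ⟨le_refl 0, by norm_num⟩
  -- loss rewrite
  have hgdef : ∀ α, lossA lam c thA thB muG α aB = G α := by
    intro α
    rw [hG]
    simp only [lossA, teamDec, hdA, hdB]
    ring
  -- lam strictly monotone
  have hlamCont : ContinuousOn lam (Set.Icc (0:ℝ) 1) :=
    fun x hx => (hlamDeriv x hx).continuousAt.continuousWithinAt
  have hlamMono : StrictMonoOn lam (Set.Icc (0:ℝ) 1) := by
    apply strictMonoOn_of_deriv_pos (convex_Icc 0 1) hlamCont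
    intro x hx
    rw [interior_Icc] at hx
    rw [(hlamDeriv x (Set.Ioo_subset_Icc_self hx)).deriv]
    exact hlam'pos x (Set.Ioo_subset_Icc_self hx)
  -- derivative of G
  have hGDeriv : ∀ α ∈ Set.Ico (0:ℝ) 1,
      HasDerivAt G (dA ^ 2 * lam' α / 2 * φ α) α := by
    intro α hα
    have hαI : α ∈ Set.Icc (0:ℝ) 1 := Set.Ico_subset_Icc_self hα
    have hl := hlamDeriv α hαI
    have hcd := hcDeriv α hα
    have hlne : lam' α ≠ 0 := ne_of_gt (hlam'pos α hαI)
    have h1 : HasDerivAt (fun x => (dA * (2 - lam x) - lam aB * dB) ^ 2 / 4 + c x)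
        ((2 * (dA * (2 - lam α) - lam aB * dB) ^ 1 * (dA * -lam' α)) / 4 + c' α) α := by
      exact (((((hl.const_sub 2).const_mul dA).sub_const (lam aB * dB)).pow 2).div_const 4).add hcd
    rw [hG]
    convert h1 using 1
    simp only [hphi, fFun, hFun]
    field_simp
    ring
  have hGCont : ContinuousOn G (Set.Ico (0:ℝ) 1) :=
    fun x hx => (hGDeriv x hx).continuousAt.continuousWithinAt
  have hGderiv_eq : ∀ x ∈ Set.Ioo (0:ℝ) 1, deriv G x = dA ^ 2 * lam' x / 2 * φ x :=
    fun x hx => (hGDeriv x ⟨hx.1.le, hx.2⟩).deriv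
  -- φ strictly monotone on Ico 0 1
  have hphiMono : StrictMonoOn φ (Set.Ico (0:ℝ) 1) := by
    intro x hx y hy hxy
    have hxI : x ∈ Set.Icc (0:ℝ) 1 := Set.Ico_subset_Icc_self hx
    have hyI : y ∈ Set.Icc (0:ℝ) 1 := Set.Ico_subset_Icc_self hy
    have h1 : lam x < lam y := hlamMono hxI hyI hxy
    have hlx : 0 < lam' x := hlam'pos x hxI
    have hly : 0 < lam' y := hlam'pos y hyI
    have hle : lam' y ≤ lam' x := hlam'anti x hxI y hyI hxy.le
    have hcx : 0 ≤ c' x := hc'nonneg x hx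
    have hcy : c' x < c' y := hc'strictMono x hx y hy hxy
    have h2 : c' x / lam' x < c' y / lam' y := by
      calc c' x / lam' x ≤ c' x / lam' y := by gcongr
        _ < c' y / lam' y := by gcongr
    have h3 : (2 / dA ^ 2) * (c' x / lam' x) < (2 / dA ^ 2) * (c' y / lam' y) := by
      have : (0:ℝ) < 2 / dA ^ 2 := by positivity
      exact mul_lt_mul_of_pos_left h2 this
    simp only [hphi, fFun]
    linarith
  -- φ continuous on Ico 0 1
  have hphiCont : ContinuousOn φ (Set.Ico (0:ℝ) 1) := by
    rw [hphi]
    have hmain : ContinuousOn (fun α => lam α + 2 / dA ^ 2 * (c' α / lam' α))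
        (Set.Ico (0:ℝ) 1) :=
      (hlamCont.mono Set.Ico_subset_Icc_self).add
        (continuousOn_const.mul (hc'Cont.div (hlam'Cont.mono Set.Ico_subset_Icc_self)
          (fun x hx => ne_of_gt (hlam'pos x (Set.Ico_subset_Icc_self hx)))))
    exact hmain.sub continuousOn_const
  -- key identity at 0
  have hphi0 : dA ^ 2 / 2 * φ 0 = c' 0 / lam' 0 - (dA ^ 2 - lam aB * dA * dB / 2) := by
    have hlne : lam' 0 ≠ 0 := ne_of_gt (hlam'pos 0 h01)
    simp only [hphi, fFun, hFun, hlam0]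
    field_simp
    ring
  have hCiff : (c' 0 / lam' 0 ≥ dA ^ 2 - lam aB * dA * dB / 2) ↔ 0 ≤ φ 0 := by
    constructor
    · intro hC
      by_contra hneg
      push_neg at hneg
      have : dA ^ 2 / 2 * φ 0 < 0 := mul_neg_of_pos_of_neg (by positivity) hneg
      linarith
    · intro hp
      have : 0 ≤ dA ^ 2 / 2 * φ 0 := by positivity
      linarith [hphi0]
  -- existence of a point where φ is positive
  have hEx : ∃ b ∈ Set.Ioo (0:ℝ) 1, 0 < φ b := by
    set h := hFun lam dA dB aB with hh
    set M : ℝ := dA ^ 2 * h / 2 * lam' 0 + lam' 0 with hM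
    have hev1 : ∀ᶠ x in nhdsWithin 1 (Set.Iio 1), M ≤ c' x :=
      hc'top.eventually (Filter.eventually_ge_atTop M)
    have hev2 : ∀ᶠ x in nhdsWithin 1 (Set.Iio 1), x ∈ Set.Ioo (0:ℝ) 1 := by
      have hlt : ∀ᶠ x : ℝ in nhdsWithin 1 (Set.Iio 1), x ∈ Set.Iio 1 :=
        eventually_mem_nhdsWithin
      have hgt : ∀ᶠ x in nhdsWithin 1 (Set.Iio 1), (0:ℝ) < x :=
        (eventually_gt_nhds (by norm_num : (0:ℝ) < 1)).filter_mono nhdsWithin_le_nhds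
      filter_upwards [hlt, hgt] with x h1 h2
      exact ⟨h2, h1⟩
    obtain ⟨b, hbM, hb⟩ := (hev1.and hev2).exists
    refine ⟨b, hb, ?_⟩
    have hbI : b ∈ Set.Icc (0:ℝ) 1 := ⟨hb.1.le, hb.2.le⟩
    have hl0 : 0 < lam' 0 := hlam'pos 0 h01
    have hlb : 0 < lam' b := hlam'pos b hbI
    have hlble : lam' b ≤ lam' 0 := hlam'anti 0 h01 b hbI hb.1.le
    have hcb : 0 ≤ c' b := hc'nonneg b ⟨hb.1.le, hb.2⟩
    have h1 : M / lam' 0 ≤ c' b / lam' 0 := by gcongr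
    have h2 : c' b / lam' 0 ≤ c' b / lam' b := by gcongr
    have hMdiv : M / lam' 0 = dA ^ 2 * h / 2 + 1 := by
      rw [hM]; field_simp
    have hchain : dA ^ 2 * h / 2 + 1 ≤ c' b / lam' b := by
      rw [← hMdiv]; exact h1.trans h2
    have h4 : (2 / dA ^ 2) * (dA ^ 2 * h / 2 + 1) ≤ (2 / dA ^ 2) * (c' b / lam' b) := by
      have : (0:ℝ) < 2 / dA ^ 2 := by positivity
      exact mul_le_mul_of_nonneg_left hchain this.le
    have h5 : (2 / dA ^ 2) * (dA ^ 2 * h / 2 + 1) = h + 2 / dA ^ 2 := by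
      field_simp
    have hlamb : 0 < lam b := by
      have := hlamMono h01 hbI hb.1
      rwa [hlam0] at this
    have h6 : (0:ℝ) < 2 / dA ^ 2 := by positivity
    simp only [hphi, fFun, ← hh]
    linarith [h4, h5]
  by_cases hcase : 0 ≤ φ 0
  · -- minimizer is 0
    have hsign : ∀ x ∈ Set.Ioo (0:ℝ) 1, 0 < φ x := fun x hx =>
      lt_of_le_of_lt hcase (hphiMono h01' ⟨hx.1.le, hx.2⟩ hx.1)
    have hmono : StrictMonoOn G (Set.Ico (0:ℝ) 1) := by
      apply strictMonoOn_of_deriv_pos (convex_Ico 0 1) hGCont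
      intro x hx
      rw [interior_Ico] at hx
      rw [hGderiv_eq x hx]
      have hlx : 0 < lam' x := hlam'pos x ⟨hx.1.le, hx.2.le⟩
      exact mul_pos (by positivity) (hsign x hx)
    have hmin : ∀ x ∈ Set.Ico (0:ℝ) 1, x ≠ 0 → G 0 < G x := fun x hx hne =>
      hmono h01' hx (lt_of_le_of_ne hx.1 (Ne.symm hne))
    have hbr : IsBestRespA lam c thA thB muG 0 aB := by
      refine ⟨h01', fun x hx => ?_⟩
      rw [hgdef, hgdef]
      rcases eq_or_ne x 0 with rfl | hne
      · exact le_refl _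
      · exact (hmin x hx hne).le
    have huniq : ∀ a, IsBestRespA lam c thA thB muG a aB → a = 0 := by
      intro a ⟨haI, hale⟩
      by_contra hne
      have h1 := hale 0 h01'
      rw [hgdef, hgdef] at h1
      exact absurd h1 (not_le.2 (hmin a haI hne))
    refine ⟨⟨0, hbr, huniq⟩, fun a ha => ?_⟩
    have ha0 : a = 0 := huniq a ha
    refine ⟨iff_of_true ha0 (hCiff.mpr hcase), fun hne => absurd ha0 hne⟩
  · -- interior minimizer
    push_neg at hcase
    obtain ⟨b, hb, hphib⟩ := hEx
    have hsub : Set.Icc (0:ℝ) b ⊆ Set.Ico (0:ℝ) 1 :=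
      fun x hx => ⟨hx.1, lt_of_le_of_lt hx.2 hb.2⟩
    obtain ⟨astar, hastar, hroot⟩ :=
      intermediate_value_Ioo hb.1.le (hphiCont.mono hsub) ⟨hcase, hphib⟩
    have hastar1 : astar ∈ Set.Ioo (0:ℝ) 1 := ⟨hastar.1, hastar.2.trans hb.2⟩
    have hastarIco : astar ∈ Set.Ico (0:ℝ) 1 := ⟨hastar1.1.le, hastar1.2⟩
    have hsneg : ∀ x ∈ Set.Ico (0:ℝ) astar, φ x < 0 := by
      intro x hx
      have := hphiMono ⟨hx.1, hx.2.trans hastar1.2⟩ hastarIco hx.2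
      rwa [hroot] at this
    have hspos : ∀ x ∈ Set.Ioo astar 1, 0 < φ x := by
      intro x hx
      have := hphiMono hastarIco ⟨hastar1.1.le.trans hx.1.le, hx.2⟩ hx.1
      rwa [hroot] at this
    have hanti : StrictAntiOn G (Set.Icc (0:ℝ) astar) := by
      apply strictAntiOn_of_deriv_neg (convex_Icc 0 astar)
        (hGCont.mono (fun x hx => ⟨hx.1, lt_of_le_of_lt hx.2 hastar1.2⟩))
      intro x hx
      rw [interior_Icc] at hx
      have hxIoo : x ∈ Set.Ioo (0:ℝ) 1 := ⟨hx.1, hx.2.trans hastar1.2⟩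
      rw [hGderiv_eq x hxIoo]
      have hlx : 0 < lam' x := hlam'pos x ⟨hx.1.le, hxIoo.2.le⟩
      exact mul_neg_of_pos_of_neg (by positivity) (hsneg x ⟨hx.1.le, hx.2⟩)
    have hmono2 : StrictMonoOn G (Set.Ico astar 1) := by
      apply strictMonoOn_of_deriv_pos (convex_Ico astar 1)
        (hGCont.mono (fun x hx => ⟨hastar1.1.le.trans hx.1, hx.2⟩))
      intro x hx
      rw [interior_Ico] at hx
      have hxIoo : x ∈ Set.Ioo (0:ℝ) 1 := ⟨hastar1.1.trans hx.1, hx.2⟩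
      rw [hGderiv_eq x hxIoo]
      have hlx : 0 < lam' x := hlam'pos x ⟨hxIoo.1.le, hx.2.le⟩
      exact mul_pos (by positivity) (hspos x hx)
    have hmin : ∀ x ∈ Set.Ico (0:ℝ) 1, x ≠ astar → G astar < G x := by
      intro x hx hne
      rcases lt_trichotomy x astar with hlt | heq | hgt
      · exact hanti ⟨hx.1, hlt.le⟩ ⟨hastar1.1.le, le_refl _⟩ hlt
      · exact absurd heq hne
      · exact hmono2 ⟨le_refl _, hastar1.2⟩ ⟨hgt.le, hx.2⟩ hgt
    have hbr : IsBestRespA lam c thA thB muG astar aB := by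
      refine ⟨hastarIco, fun x hx => ?_⟩
      rw [hgdef, hgdef]
      rcases eq_or_ne x astar with rfl | hne
      · exact le_refl _
      · exact (hmin x hx hne).le
    have huniq : ∀ a, IsBestRespA lam c thA thB muG a aB → a = astar := by
      intro a ⟨haI, hale⟩
      by_contra hne
      have h1 := hale astar hastarIco
      rw [hgdef, hgdef] at h1
      exact absurd h1 (not_le.2 (hmin a haI hne))
    refine ⟨⟨astar, hbr, huniq⟩, fun a ha => ?_⟩
    have haeq : a = astar := huniq a ha
    subst haeq
    constructor
    · exact iff_of_false (ne_of_gt hastar1.1) (fun hC => absurd (hCiff.mp hC) (not_le.2 hcase))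
    · intro _
      refine ⟨hastar1, sub_eq_zero.mp hroot, ?_⟩
      intro x hx hfx
      have hx' : x ∈ Set.Ico (0:ℝ) 1 := ⟨hx.1.le, hx.2⟩
      have hphix : φ x = 0 := sub_eq_zero.mpr hfx
      exact hphiMono.injOn hx' hastarIco (by rw [hphix, hroot])
end

section
/- (Proposition 1, conflicting-preferences case.) Assume d_A ≠ 0, d_B ≠ 0, and d_A·d_B < 0; set κ = d_A/d_B < 0, and for α_B ∈ [0,1) let α_A*(α_B) denote the unique minimizer of L_A(·, α_B) on [0,1). Then: (i) if d_A²·(1 − 1/(2κ)) ≤ p, then α_A*(α_B) = 0 for every α_B; (ii) if d_A² ≥ p, then for every α_B with strict inequality d_A² − λ(α_B)d_A d_B/2 > p, α_A*(α_B) is the unique solution in (0,1) of f_A(α) = h_A(α_B); (iii) if d_A² < p < d_A²·(1 − 1/(2κ)), then α_A*(α_B) = 0 when λ(α_B) ≤ (2d_A² − 2p)/(d_A d_B), and α_A*(α_B) is the unique solution in (0,1) of f_A(α) = h_A(α_B) when λ(α_B) > (2d_A² − 2p)/(d_A d_B). -/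
/-!
With `d_A = θ_A − μ_G`, the derivative of Alice's loss in her own revelation `α` is
`λ'(α) · (d_A² / 2) · (f_A(α) − h_A(α_B))`. As `f_A` is strictly increasing on `[0,1)` (λ increasing,
λ' positive and nonincreasing, c' increasing) and tends to `+∞` at `1`, the loss is either
increasing on all of `[0,1)`, when `h_A(α_B) ≤ f_A(0)`, so that the minimizer is `0`; or it
decreases up to the unique root of `f_A = h_A(α_B)` and increases afterwards. The sign of
`f_A(0) − h_A(α_B)` is that of `p − (d_A² − λ(α_B) d_A d_B / 2)`, and the three cases follow from
`0 ≤ λ(α_B) ≤ 1` and `d_A d_B < 0`.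
-/

open Set Filter

open Topology

theorem strictMonoOn_Icc_of_hasDerivAt {f f' : ℝ → ℝ} {u v : ℝ}
    (hf : ∀ x ∈ Icc u v, HasDerivAt f (f' x) x) (hf' : ∀ x ∈ Ioo u v, 0 < f' x) :
    StrictMonoOn f (Icc u v) :=
  strictMonoOn_of_hasDerivWithinAt_pos (convex_Icc u v)
    (fun x hx => (hf x hx).continuousAt.continuousWithinAt)
    (by rw [interior_Icc]; exact fun x hx => (hf x (Ioo_subset_Icc_self hx)).hasDerivWithinAt)
    (by rwa [interior_Icc])

theorem strictAntiOn_Icc_of_hasDerivAt {f f' : ℝ → ℝ} {u v : ℝ}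
    (hf : ∀ x ∈ Icc u v, HasDerivAt f (f' x) x) (hf' : ∀ x ∈ Ioo u v, f' x < 0) :
    StrictAntiOn f (Icc u v) :=
  strictAntiOn_of_hasDerivWithinAt_neg (convex_Icc u v)
    (fun x hx => (hf x hx).continuousAt.continuousWithinAt)
    (by rw [interior_Icc]; exact fun x hx => (hf x (Ioo_subset_Icc_self hx)).hasDerivWithinAt)
    (by rwa [interior_Icc])

theorem IsMinOn.eq_of_hasDerivAt_neg_pos {L L' : ℝ → ℝ} {s : Set ℝ} [s.OrdConnected] {m r : ℝ}
    (hL : ∀ x ∈ s, HasDerivAt L (L' x) x) (hneg : ∀ x ∈ s, x < r → L' x < 0)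
    (hpos : ∀ x ∈ s, r < x → 0 < L' x) (hr : r ∈ s) (hm : m ∈ s) (hmin : IsMinOn L s m) :
    m = r := by
  by_contra hne
  have hLr : L m ≤ L r := hmin hr
  rcases lt_or_gt_of_ne hne with hmr | hrm
  · have hsub := s.Icc_subset hm hr
    have hanti := strictAntiOn_Icc_of_hasDerivAt (fun x hx => hL x (hsub hx))
      fun x hx => hneg x (hsub (Ioo_subset_Icc_self hx)) hx.2
    exact (hanti ⟨le_rfl, hmr.le⟩ ⟨hmr.le, le_rfl⟩ hmr).not_ge hLr
  · have hsub := s.Icc_subset hr hm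
    have hmono := strictMonoOn_Icc_of_hasDerivAt (fun x hx => hL x (hsub hx))
      fun x hx => hpos x (hsub (Ioo_subset_Icc_self hx)) hx.1
    exact (hmono ⟨le_rfl, hrm.le⟩ ⟨hrm.le, le_rfl⟩ hrm).not_ge hLr

section FirstOrderCondition

variable {L F w : ℝ → ℝ} {a b k m : ℝ}

theorem IsMinOn.eq_of_apply_eq {s : Set ℝ} [s.OrdConnected] {r : ℝ}
    (hL : ∀ x ∈ s, HasDerivAt L (w x * (F x - k)) x) (hw : ∀ x ∈ s, 0 < w x)
    (hF : StrictMonoOn F s) (hr : r ∈ s) (hFr : F r = k) (hm : m ∈ s) (hmin : IsMinOn L s m) :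
    m = r :=
  hmin.eq_of_hasDerivAt_neg_pos hL
    (fun x hx hxr => mul_neg_of_pos_of_neg (hw x hx) (sub_neg.2 (hFr ▸ hF hx hr hxr)))
    (fun x hx hrx => mul_pos (hw x hx) (sub_pos.2 (hFr ▸ hF hr hx hrx))) hr hm

theorem IsMinOn.eq_left_of_le (hL : ∀ x ∈ Ico a b, HasDerivAt L (w x * (F x - k)) x)
    (hw : ∀ x ∈ Ico a b, 0 < w x) (hF : StrictMonoOn F (Ico a b)) (hk : k ≤ F a)
    (hm : m ∈ Ico a b) (hmin : IsMinOn L (Ico a b) m) : m = a := by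
  have ha : a ∈ Ico a b := ⟨le_rfl, hm.1.trans_lt hm.2⟩
  exact hmin.eq_of_hasDerivAt_neg_pos hL (fun x hx hxa => absurd hx.1 (not_le.2 hxa))
    (fun x hx hax => mul_pos (hw x hx) (sub_pos.2 (hk.trans_lt (hF ha hx hax)))) ha hm

theorem exists_mem_Ioo_eq_of_tendsto_atTop (hab : a < b) (hF : ContinuousOn F (Ico a b))
    (htop : Tendsto F (𝓝[<] b) atTop) (hk : F a < k) : ∃ r ∈ Ioo a b, F r = k := by
  rw [← nhdsWithin_Ico_eq_nhdsLT hab] at htop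
  have : (𝓝[Ico a b] b).NeBot := by rw [nhdsWithin_Ico_eq_nhdsLT hab]; infer_instance
  obtain ⟨r, hr, hFr⟩ := isPreconnected_Ico.intermediate_value_Ici (left_mem_Ico.2 hab)
    (le_principal_iff.2 self_mem_nhdsWithin) hF htop hk.le
  exact ⟨r, ⟨hr.1.lt_of_ne (by rintro rfl; exact hk.ne hFr), hr.2⟩, hFr⟩

theorem IsMinOn.mem_Ioo_and_eq_of_lt (hL : ∀ x ∈ Ico a b, HasDerivAt L (w x * (F x - k)) x)
    (hw : ∀ x ∈ Ico a b, 0 < w x) (hF : StrictMonoOn F (Ico a b))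
    (hFcont : ContinuousOn F (Ico a b)) (htop : Tendsto F (𝓝[<] b) atTop) (hk : F a < k)
    (hm : m ∈ Ico a b) (hmin : IsMinOn L (Ico a b) m) : m ∈ Ioo a b ∧ F m = k := by
  obtain ⟨r, hr, hFr⟩ := exists_mem_Ioo_eq_of_tendsto_atTop (hm.1.trans_lt hm.2) hFcont htop hk
  obtain rfl := hmin.eq_of_apply_eq hL hw hF (Ioo_subset_Ico_self hr) hFr hm
  exact ⟨hr, hFr⟩

end FirstOrderCondition

section Model

variable {lam lam' c c' : ℝ → ℝ}

theorem hasDerivAt_lossA {thA thB mu aB α : ℝ} (hlam : HasDerivAt lam (lam' α) α)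
    (hc : HasDerivAt c (c' α) α) (hlam' : lam' α ≠ 0) (hA : thA - mu ≠ 0) :
    HasDerivAt (fun x => lossA lam c thA thB mu x aB)
      (lam' α * ((thA - mu) ^ 2 / 2) *
        (fFun lam lam' c' (thA - mu) α - hFun lam (thA - mu) (thB - mu) aB)) α := by
  have hloss : (fun x => lossA lam c thA thB mu x aB) = fun x =>
      ((thA - mu) - (lam x * (thA - mu) + lam aB * (thB - mu)) / 2) ^ 2 + c x := by
    funext x
    simp only [lossA, teamDec]
    ring
  have hdev := (((hlam.mul_const (thA - mu)).add_const (lam aB * (thB - mu))).div_const 2).const_sub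
    (thA - mu)
  rw [hloss]
  refine ((hdev.pow 2).add hc).congr_deriv ?_
  simp only [fFun, hFun]
  field_simp
  ring

theorem strictMonoOn_fFun {s : Set ℝ} {d : ℝ} (hlam : StrictMonoOn lam s)
    (hlam'pos : ∀ x ∈ s, 0 < lam' x) (hlam' : AntitoneOn lam' s) (hc'nonneg : ∀ x ∈ s, 0 ≤ c' x)
    (hc' : StrictMonoOn c' s) (hd : d ≠ 0) : StrictMonoOn (fFun lam lam' c' d) s := by
  intro x hx y hy hxy
  have hratio : c' x / lam' x < c' y / lam' y :=
    calc c' x / lam' x ≤ c' x / lam' y :=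
          div_le_div_of_nonneg_left (hc'nonneg x hx) (hlam'pos y hy) (hlam' hx hy hxy.le)
      _ < c' y / lam' y := div_lt_div_of_pos_right (hc' hx hy hxy) (hlam'pos y hy)
  exact add_lt_add (hlam hx hy hxy) (mul_lt_mul_of_pos_left hratio (by positivity))

theorem continuousOn_fFun {s : Set ℝ} {d : ℝ} (hlam : ContinuousOn lam s)
    (hlam' : ContinuousOn lam' s) (hc' : ContinuousOn c' s) (h0 : ∀ x ∈ s, lam' x ≠ 0) :
    ContinuousOn (fFun lam lam' c' d) s :=
  hlam.add (continuousOn_const.mul (hc'.div hlam' h0))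

theorem tendsto_fFun_atTop {a b d : ℝ} (hab : a < b) (hc' : Tendsto c' (𝓝[<] b) atTop)
    (hd : d ≠ 0) (hlam : ∀ x ∈ Ico a b, 0 ≤ lam x) (hlam'pos : ∀ x ∈ Ico a b, 0 < lam' x)
    (hlam' : AntitoneOn lam' (Ico a b)) : Tendsto (fFun lam lam' c' d) (𝓝[<] b) atTop := by
  have ha : a ∈ Ico a b := left_mem_Ico.2 hab
  refine tendsto_atTop_mono' _ ?_ ((hc'.atTop_div_const (hlam'pos a ha)).const_mul_atTop
    (by positivity : (0:ℝ) < 2 / d ^ 2))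
  filter_upwards [Ico_mem_nhdsLT hab, hc'.eventually_ge_atTop 0] with x hx hc'x
  have : c' x / lam' a ≤ c' x / lam' x :=
    div_le_div_of_nonneg_left hc'x (hlam'pos x hx) (hlam' ha hx hx.1)
  have := mul_le_mul_of_nonneg_left this (by positivity : (0:ℝ) ≤ 2 / d ^ 2)
  simp only [fFun]
  linarith [hlam x hx]

theorem hFun_le_fFun_zero_iff {dA dB aB : ℝ} (hlam0 : lam 0 = 0) (hdA : dA ≠ 0) :
    hFun lam dA dB aB ≤ fFun lam lam' c' dA 0 ↔
      dA ^ 2 - lam aB * dA * dB / 2 ≤ c' 0 / lam' 0 := by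
  have h : fFun lam lam' c' dA 0 - hFun lam dA dB aB =
      2 / dA ^ 2 * (c' 0 / lam' 0 - (dA ^ 2 - lam aB * dA * dB / 2)) := by
    simp only [fFun, hFun, hlam0]
    field_simp
    ring
  rw [← sub_nonneg, h, mul_nonneg_iff_of_pos_left (by positivity), sub_nonneg]

end Model

theorem bestRespA_conflicting_general
    (lam lam' c c' : ℝ → ℝ)
    (hlamDeriv : ∀ α ∈ Set.Icc (0:ℝ) 1, HasDerivAt lam (lam' α) α)
    (hlam'Cont : ContinuousOn lam' (Set.Icc (0:ℝ) 1))
    (hlam0 : lam 0 = 0) (hlam1 : lam 1 = 1)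
    (hlam'pos : ∀ α ∈ Set.Icc (0:ℝ) 1, 0 < lam' α)
    (hlam'anti : ∀ x ∈ Set.Icc (0:ℝ) 1, ∀ y ∈ Set.Icc (0:ℝ) 1, x ≤ y → lam' y ≤ lam' x)
    (hcDeriv : ∀ α ∈ Set.Ico (0:ℝ) 1, HasDerivAt c (c' α) α)
    (hc'Cont : ContinuousOn c' (Set.Ico (0:ℝ) 1))
    (hc'nonneg : ∀ α ∈ Set.Ico (0:ℝ) 1, 0 ≤ c' α)
    (hc'strictMono : ∀ x ∈ Set.Ico (0:ℝ) 1, ∀ y ∈ Set.Ico (0:ℝ) 1, x < y → c' x < c' y)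
    (hc'top : Filter.Tendsto c' (nhdsWithin 1 (Set.Iio 1)) Filter.atTop)
    (thA thB muG dA dB : ℝ)
    (hdA : dA = thA - muG) (hdB : dB = thB - muG)
    (hdAne : dA ≠ 0) (hconf : dA * dB < 0) :
    -- (i) if `d_A²(1 − 1/(2κ)) ≤ p`, Alice never reveals
    ((dA ^ 2 * (1 - 1 / (2 * (dA / dB))) ≤ c' 0 / lam' 0 →
        ∀ aB ∈ Set.Ico (0:ℝ) 1, ∀ a, IsBestRespA lam c thA thB muG a aB → a = 0)) ∧
    -- (ii) if `d_A² ≥ p` and `d_A² − λ(α_B)d_Ad_B/2 > p`, Alice's best response is the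
    -- unique interior solution of `f_A(α) = h_A(α_B)`
    ((dA ^ 2 ≥ c' 0 / lam' 0 →
        ∀ aB ∈ Set.Ico (0:ℝ) 1, dA ^ 2 - lam aB * dA * dB / 2 > c' 0 / lam' 0 →
          ∀ a, IsBestRespA lam c thA thB muG a aB →
            a ∈ Set.Ioo (0:ℝ) 1 ∧
            fFun lam lam' c' dA a = hFun lam dA dB aB ∧
            ∀ x ∈ Set.Ioo (0:ℝ) 1, fFun lam lam' c' dA x = hFun lam dA dB aB → x = a)) ∧
    -- (iii) intermediate trigger price: threshold behavior in `λ(α_B)`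
    ((dA ^ 2 < c' 0 / lam' 0 ∧ c' 0 / lam' 0 < dA ^ 2 * (1 - 1 / (2 * (dA / dB))) →
        ∀ aB ∈ Set.Ico (0:ℝ) 1, ∀ a, IsBestRespA lam c thA thB muG a aB →
          ((lam aB ≤ (2 * dA ^ 2 - 2 * (c' 0 / lam' 0)) / (dA * dB) → a = 0) ∧
           (lam aB > (2 * dA ^ 2 - 2 * (c' 0 / lam' 0)) / (dA * dB) →
             a ∈ Set.Ioo (0:ℝ) 1 ∧
             fFun lam lam' c' dA a = hFun lam dA dB aB ∧
             ∀ x ∈ Set.Ioo (0:ℝ) 1, fFun lam lam' c' dA x = hFun lam dA dB aB → x = a)))) := by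
  subst hdA hdB
  set dA := thA - muG
  set dB := thB - muG
  have hIco : Ico (0:ℝ) 1 ⊆ Icc 0 1 := Ico_subset_Icc_self
  have hlam : StrictMonoOn lam (Icc 0 1) :=
    strictMonoOn_Icc_of_hasDerivAt hlamDeriv fun x hx => hlam'pos x (Ioo_subset_Icc_self hx)
  have hlamIcc : MapsTo lam (Icc 0 1) (Icc 0 1) := by
    simpa only [hlam0, hlam1] using hlam.monotoneOn.mapsTo_Icc
  have hlam'Ico : ∀ x ∈ Ico (0:ℝ) 1, 0 < lam' x := fun x hx => hlam'pos x (hIco hx)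
  have hlam'anti' : AntitoneOn lam' (Ico 0 1) := fun x hx y hy => hlam'anti x (hIco hx) y (hIco hy)
  have hF := strictMonoOn_fFun (hlam.mono hIco) hlam'Ico hlam'anti' hc'nonneg hc'strictMono hdAne
  have hFcont := continuousOn_fFun (d := dA)
    (fun x hx => (hlamDeriv x (hIco hx)).continuousAt.continuousWithinAt) (hlam'Cont.mono hIco)
    hc'Cont fun x hx => (hlam'Ico x hx).ne'
  have hFtop := tendsto_fFun_atTop one_pos hc'top hdAne (fun x hx => (hlamIcc (hIco hx)).1)
    hlam'Ico hlam'anti'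
  have hL (aB : ℝ) : ∀ x ∈ Ico (0:ℝ) 1, HasDerivAt (fun α => lossA lam c thA thB muG α aB)
      (lam' x * (dA ^ 2 / 2) * (fFun lam lam' c' dA x - hFun lam dA dB aB)) x := fun x hx =>
    hasDerivAt_lossA (hlamDeriv x (hIco hx)) (hcDeriv x hx) (hlam'Ico x hx).ne' hdAne
  have hw : ∀ x ∈ Ico (0:ℝ) 1, 0 < lam' x * (dA ^ 2 / 2) := fun x hx =>
    mul_pos (hlam'Ico x hx) (by positivity)
  have hcorner (aB a : ℝ) (ha : IsBestRespA lam c thA thB muG a aB)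
      (hp : dA ^ 2 - lam aB * dA * dB / 2 ≤ c' 0 / lam' 0) : a = 0 :=
    IsMinOn.eq_left_of_le (hL aB) hw hF ((hFun_le_fFun_zero_iff hlam0 hdAne).2 hp) ha.1 ha.2
  have hinterior (aB a : ℝ) (ha : IsBestRespA lam c thA thB muG a aB)
      (hp : c' 0 / lam' 0 < dA ^ 2 - lam aB * dA * dB / 2) :
      a ∈ Ioo 0 1 ∧ fFun lam lam' c' dA a = hFun lam dA dB aB ∧
        ∀ x ∈ Ioo 0 1, fFun lam lam' c' dA x = hFun lam dA dB aB → x = a := by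
    obtain ⟨haI, haF⟩ := IsMinOn.mem_Ioo_and_eq_of_lt (hL aB) hw hF hFcont hFtop
      (not_le.1 (mt (hFun_le_fFun_zero_iff hlam0 hdAne).1 (not_le.2 hp))) ha.1 ha.2
    exact ⟨haI, haF, fun x hx hxF =>
      hF.injOn (Ioo_subset_Ico_self hx) (Ioo_subset_Ico_self haI) (hxF.trans haF.symm)⟩
  refine ⟨fun hp aB haB a ha => hcorner aB a ha ?_, fun _ aB _ hp a ha => hinterior aB a ha hp,
    fun _ aB _ a ha => ⟨fun hle => hcorner aB a ha ?_, fun hgt => hinterior aB a ha ?_⟩⟩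
  · have hκ : dA ^ 2 * (1 - 1 / (2 * (dA / dB))) = dA ^ 2 - dA * dB / 2 := by
      field_simp
    nlinarith [(hlamIcc (hIco haB)).2]
  · rw [le_div_iff_of_neg hconf] at hle
    linarith
  · rw [gt_iff_lt, div_lt_iff_of_neg hconf] at hgt
    linarith

/-- Proposition 1, conflicting preferences, `κ = d_A/d_B < 0`. -/
theorem bestRespA_conflicting
    (lam lam' c c' : ℝ → ℝ)
    (hlamDeriv : ∀ α ∈ Set.Icc (0:ℝ) 1, HasDerivAt lam (lam' α) α)
    (hlam'Cont : ContinuousOn lam' (Set.Icc (0:ℝ) 1))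
    (hlam0 : lam 0 = 0) (hlam1 : lam 1 = 1)
    (hlam'pos : ∀ α ∈ Set.Icc (0:ℝ) 1, 0 < lam' α)
    (hlam'anti : ∀ x ∈ Set.Icc (0:ℝ) 1, ∀ y ∈ Set.Icc (0:ℝ) 1, x ≤ y → lam' y ≤ lam' x)
    (hcDeriv : ∀ α ∈ Set.Ico (0:ℝ) 1, HasDerivAt c (c' α) α)
    (hc'Cont : ContinuousOn c' (Set.Ico (0:ℝ) 1))
    (hc0 : c 0 = 0)
    (hc'nonneg : ∀ α ∈ Set.Ico (0:ℝ) 1, 0 ≤ c' α)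
    (hc'strictMono : ∀ x ∈ Set.Ico (0:ℝ) 1, ∀ y ∈ Set.Ico (0:ℝ) 1, x < y → c' x < c' y)
    (hc'top : Filter.Tendsto c' (nhdsWithin 1 (Set.Iio 1)) Filter.atTop)
    (thA thB muG dA dB : ℝ)
    (hdA : dA = thA - muG) (hdB : dB = thB - muG)
    (hdAne : dA ≠ 0) (hdBne : dB ≠ 0) (hconf : dA * dB < 0) :
    -- (i) if `d_A²(1 − 1/(2κ)) ≤ p`, Alice never reveals
    ((dA ^ 2 * (1 - 1 / (2 * (dA / dB))) ≤ c' 0 / lam' 0 →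
        ∀ aB ∈ Set.Ico (0:ℝ) 1, ∀ a, IsBestRespA lam c thA thB muG a aB → a = 0)) ∧
    -- (ii) if `d_A² ≥ p` and `d_A² − λ(α_B)d_Ad_B/2 > p`, Alice's best response is the
    -- unique interior solution of `f_A(α) = h_A(α_B)`
    ((dA ^ 2 ≥ c' 0 / lam' 0 →
        ∀ aB ∈ Set.Ico (0:ℝ) 1, dA ^ 2 - lam aB * dA * dB / 2 > c' 0 / lam' 0 →
          ∀ a, IsBestRespA lam c thA thB muG a aB →
            a ∈ Set.Ioo (0:ℝ) 1 ∧
            fFun lam lam' c' dA a = hFun lam dA dB aB ∧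
            ∀ x ∈ Set.Ioo (0:ℝ) 1, fFun lam lam' c' dA x = hFun lam dA dB aB → x = a)) ∧
    -- (iii) intermediate trigger price: threshold behavior in `λ(α_B)`
    ((dA ^ 2 < c' 0 / lam' 0 ∧ c' 0 / lam' 0 < dA ^ 2 * (1 - 1 / (2 * (dA / dB))) →
        ∀ aB ∈ Set.Ico (0:ℝ) 1, ∀ a, IsBestRespA lam c thA thB muG a aB →
          ((lam aB ≤ (2 * dA ^ 2 - 2 * (c' 0 / lam' 0)) / (dA * dB) → a = 0) ∧
           (lam aB > (2 * dA ^ 2 - 2 * (c' 0 / lam' 0)) / (dA * dB) →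
             a ∈ Set.Ioo (0:ℝ) 1 ∧
             fFun lam lam' c' dA a = hFun lam dA dB aB ∧
             ∀ x ∈ Set.Ioo (0:ℝ) 1, fFun lam lam' c' dA x = hFun lam dA dB aB → x = a)))) :=
  bestRespA_conflicting_general lam lam' c c' hlamDeriv hlam'Cont hlam0 hlam1 hlam'pos hlam'anti
    hcDeriv hc'Cont hc'nonneg hc'strictMono hc'top thA thB muG dA dB hdA hdB hdAne hconf
end

section
/- (NR equilibrium characterization.) Assume d_A ≠ 0 and d_B ≠ 0. The profile (0,0) is a Nash equilibrium of the digital representative game if and only if p ≥ d_A² and p ≥ d_B². -/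
open Set Filter

/-! Against a silent partner, a member with diversity `d` faces
`g(α) = d² (1 - λ(α)/2)² + c(α)`, whose derivative `c'(α) - d² λ'(α) (1 - λ(α)/2)` is smallest
at `α = 0` because `c'` increases, `λ'` decreases and `λ ≥ 0`. Hence `0` minimises `g` on `[0,1)`
exactly when `g'(0) = c'(0) - d² λ'(0) ≥ 0`, that is when `p ≥ d²`. -/

theorem isMinOn_Ico_left_iff_deriv_nonneg {g g' : ℝ → ℝ} {a b : ℝ} (hab : a < b)
    (hg : ∀ x ∈ Ico a b, HasDerivAt g (g' x) x) (hg' : ∀ x ∈ Ico a b, g' a ≤ g' x) :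
    IsMinOn g (Ico a b) a ↔ 0 ≤ g' a := by
  have ha : a ∈ Ico a b := ⟨le_rfl, hab⟩
  constructor
  · intro hmin
    have hcone : (1 : ℝ) ∈ posTangentConeAt (Ico a b) a :=
      one_mem_posTangentConeAt_iff_frequently.2
        (Eventually.frequently (Ico_mem_nhdsGT hab))
    simpa using hmin.localize.hasFDerivWithinAt_nonneg
      (hg a ha).hasFDerivAt.hasFDerivWithinAt hcone
  · intro h0
    have hmono : MonotoneOn g (Ico a b) :=
      monotoneOn_of_hasDerivWithinAt_nonneg (convex_Ico a b)
        (fun x hx => (hg x hx).continuousAt.continuousWithinAt)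
        (fun x hx => (hg x (interior_subset hx)).hasDerivWithinAt)
        (fun x hx => h0.trans (hg' x (interior_subset hx)))
    exact isMinOn_iff.2 fun x hx => hmono ha hx hx.1

noncomputable def soloLoss (lam c : ℝ → ℝ) (d α : ℝ) : ℝ :=
  d ^ 2 * (1 - lam α / 2) ^ 2 + c α

section SoloLoss

variable {lam lam' c c' : ℝ → ℝ}

theorem lossA_zero_right (hlam0 : lam 0 = 0) (thA thB mu α : ℝ) :
    lossA lam c thA thB mu α 0 = soloLoss lam c (thA - mu) α := by
  simp only [lossA, teamDec, soloLoss, hlam0]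
  ring

theorem lossB_zero_left (hlam0 : lam 0 = 0) (thA thB mu α : ℝ) :
    lossB lam c thA thB mu 0 α = soloLoss lam c (thB - mu) α := by
  simp only [lossB, teamDec, soloLoss, hlam0]
  ring

theorem hasDerivAt_soloLoss {α : ℝ} (hlam : HasDerivAt lam (lam' α) α)
    (hc : HasDerivAt c (c' α) α) (d : ℝ) :
    HasDerivAt (soloLoss lam c d) (c' α - d ^ 2 * lam' α * (1 - lam α / 2)) α := by
  have hgap : HasDerivAt (fun x => 1 - lam x / 2) (-(lam' α / 2)) α :=
    (hlam.div_const 2).const_sub 1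
  exact (((hgap.pow 2).const_mul (d ^ 2)).add hc).congr_deriv (by ring)

theorem soloLoss_deriv_zero_le (hlam0 : lam 0 = 0)
    (hlam_nonneg : ∀ α ∈ Icc (0 : ℝ) 1, 0 ≤ lam α) (hlam'nonneg : ∀ α ∈ Icc (0 : ℝ) 1, 0 ≤ lam' α)
    (hlam'anti : AntitoneOn lam' (Icc 0 1)) (hc'mono : MonotoneOn c' (Ico 0 1)) (d : ℝ)
    {α : ℝ} (hα : α ∈ Ico (0 : ℝ) 1) :
    c' 0 - d ^ 2 * lam' 0 * (1 - lam 0 / 2) ≤ c' α - d ^ 2 * lam' α * (1 - lam α / 2) := by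
  have hα' : α ∈ Icc (0 : ℝ) 1 := Ico_subset_Icc_self hα
  have hc' : c' 0 ≤ c' α := hc'mono (left_mem_Ico.2 zero_lt_one) hα hα.1
  have hlam' : lam' α * (1 - lam α / 2) ≤ lam' 0 :=
    calc lam' α * (1 - lam α / 2) ≤ lam' α := by
          nlinarith [mul_nonneg (hlam'nonneg α hα') (hlam_nonneg α hα')]
      _ ≤ lam' 0 := hlam'anti (left_mem_Icc.2 zero_le_one) hα' hα'.1
  calc c' 0 - d ^ 2 * lam' 0 * (1 - lam 0 / 2) = c' 0 - d ^ 2 * lam' 0 := by rw [hlam0]; ring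
    _ ≤ c' α - d ^ 2 * (lam' α * (1 - lam α / 2)) := by gcongr
    _ = c' α - d ^ 2 * lam' α * (1 - lam α / 2) := by ring

theorem isMinOn_soloLoss_zero_iff
    (hlamDeriv : ∀ α ∈ Icc (0 : ℝ) 1, HasDerivAt lam (lam' α) α) (hlam0 : lam 0 = 0)
    (hlam'pos : ∀ α ∈ Icc (0 : ℝ) 1, 0 < lam' α) (hlam'anti : AntitoneOn lam' (Icc 0 1))
    (hcDeriv : ∀ α ∈ Ico (0 : ℝ) 1, HasDerivAt c (c' α) α) (hc'mono : MonotoneOn c' (Ico 0 1))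
    (d : ℝ) :
    IsMinOn (soloLoss lam c d) (Ico 0 1) 0 ↔ d ^ 2 ≤ c' 0 / lam' 0 := by
  have hlam_mono : MonotoneOn lam (Icc 0 1) :=
    monotoneOn_of_hasDerivWithinAt_nonneg (convex_Icc 0 1)
      (fun x hx => (hlamDeriv x hx).continuousAt.continuousWithinAt)
      (fun x hx => (hlamDeriv x (interior_subset hx)).hasDerivWithinAt)
      (fun x hx => (hlam'pos x (interior_subset hx)).le)
  have hlam_nonneg : ∀ α ∈ Icc (0 : ℝ) 1, 0 ≤ lam α := fun α hα =>
    hlam0 ▸ hlam_mono (left_mem_Icc.2 zero_le_one) hα hα.1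
  rw [isMinOn_Ico_left_iff_deriv_nonneg zero_lt_one
      (fun α hα => hasDerivAt_soloLoss (hlamDeriv α (Ico_subset_Icc_self hα)) (hcDeriv α hα) d)
      (fun α hα => soloLoss_deriv_zero_le hlam0 hlam_nonneg (fun x hx => (hlam'pos x hx).le)
        hlam'anti hc'mono d hα),
    hlam0, le_div_iff₀ (hlam'pos 0 (left_mem_Icc.2 zero_le_one))]
  constructor <;> intro h <;> linarith

end SoloLoss

theorem NR_equilibrium_iff_general
    (lam lam' c c' : ℝ → ℝ)
    (hlamDeriv : ∀ α ∈ Set.Icc (0:ℝ) 1, HasDerivAt lam (lam' α) α)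
    (hlam0 : lam 0 = 0)
    (hlam'pos : ∀ α ∈ Set.Icc (0:ℝ) 1, 0 < lam' α)
    (hlam'anti : ∀ x ∈ Set.Icc (0:ℝ) 1, ∀ y ∈ Set.Icc (0:ℝ) 1, x ≤ y → lam' y ≤ lam' x)
    (hcDeriv : ∀ α ∈ Set.Ico (0:ℝ) 1, HasDerivAt c (c' α) α)
    (hc'strictMono : ∀ x ∈ Set.Ico (0:ℝ) 1, ∀ y ∈ Set.Ico (0:ℝ) 1, x < y → c' x < c' y)
    (thA thB muG dA dB : ℝ)
    (hdA : dA = thA - muG) (hdB : dB = thB - muG) :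
    IsNashEq lam c thA thB muG 0 0 ↔
      (c' 0 / lam' 0 ≥ dA ^ 2 ∧ c' 0 / lam' 0 ≥ dB ^ 2) := by
  have hc'mono : MonotoneOn c' (Ico 0 1) := StrictMonoOn.monotoneOn hc'strictMono
  subst hdA hdB
  simp only [IsNashEq, lossA_zero_right hlam0, lossB_zero_left hlam0, ← isMinOn_iff,
    isMinOn_soloLoss_zero_iff hlamDeriv hlam0 hlam'pos hlam'anti hcDeriv hc'mono,
    left_mem_Ico, zero_lt_one, true_and]

/-- NR equilibrium characterization. The profile `(0,0)` is a Nash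
equilibrium iff `p ≥ d_A²` and `p ≥ d_B²`. -/
theorem NR_equilibrium_iff
    (lam lam' c c' : ℝ → ℝ)
    (hlamDeriv : ∀ α ∈ Set.Icc (0:ℝ) 1, HasDerivAt lam (lam' α) α)
    (hlam'Cont : ContinuousOn lam' (Set.Icc (0:ℝ) 1))
    (hlam0 : lam 0 = 0) (hlam1 : lam 1 = 1)
    (hlam'pos : ∀ α ∈ Set.Icc (0:ℝ) 1, 0 < lam' α)
    (hlam'anti : ∀ x ∈ Set.Icc (0:ℝ) 1, ∀ y ∈ Set.Icc (0:ℝ) 1, x ≤ y → lam' y ≤ lam' x)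
    (hcDeriv : ∀ α ∈ Set.Ico (0:ℝ) 1, HasDerivAt c (c' α) α)
    (hc'Cont : ContinuousOn c' (Set.Ico (0:ℝ) 1))
    (hc0 : c 0 = 0)
    (hc'nonneg : ∀ α ∈ Set.Ico (0:ℝ) 1, 0 ≤ c' α)
    (hc'strictMono : ∀ x ∈ Set.Ico (0:ℝ) 1, ∀ y ∈ Set.Ico (0:ℝ) 1, x < y → c' x < c' y)
    (hc'top : Filter.Tendsto c' (nhdsWithin 1 (Set.Iio 1)) Filter.atTop)
    (thA thB muG dA dB : ℝ)
    (hdA : dA = thA - muG) (hdB : dB = thB - muG)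
    (hdAne : dA ≠ 0) (hdBne : dB ≠ 0) :
    IsNashEq lam c thA thB muG 0 0 ↔
      (c' 0 / lam' 0 ≥ dA ^ 2 ∧ c' 0 / lam' 0 ≥ dB ^ 2) :=
  NR_equilibrium_iff_general lam lam' c c' hlamDeriv hlam0 hlam'pos hlam'anti hcDeriv hc'strictMono
    thA thB muG dA dB hdA hdB
end

section
/- (OPR equilibrium characterization.) Assume d_A ≠ 0, d_B ≠ 0, and p < d_A². Let α_A⁰ ∈ (0,1) be the unique solution of f_A(α) = 2. Then the profile (α_A⁰, 0) is a Nash equilibrium of the digital representative game if and only if p ≥ d_B² − λ(α_A⁰)·d_A·d_B/2. -/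
open Set Filter

/-!
Against `α_B = 0`, Alice's loss has derivative `c'(α) − d_A² (2 − λ(α)) λ'(α) / 2`. It is
nondecreasing, since `c'` increases while `2 − λ` and `λ'` are positive and decrease, so its zero
`α_A⁰` (the equation `f_A = 2`) is her best response. Against `α_A⁰`, Bob's loss has derivative
`c'(α) − d_B (2 d_B − λ(α_A⁰) d_A − d_B λ(α)) λ'(α) / 2`, whose subtracted term is antitone wherever
it is positive. Hence this derivative is nonnegative on `[0,1)` exactly when it is nonnegative at
`0`, which is the inequality `p ≥ d_B² − λ(α_A⁰) d_A d_B / 2`.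
-/

lemma Convex.monotoneOn_of_hasDerivAt_nonneg {D : Set ℝ} (hD : Convex ℝ D) {f f' : ℝ → ℝ}
    (hf : ∀ x ∈ D, HasDerivAt f (f' x) x) (hf' : ∀ x ∈ D, 0 ≤ f' x) : MonotoneOn f D :=
  monotoneOn_of_hasDerivWithinAt_nonneg hD (fun x hx ↦ (hf x hx).continuousAt.continuousWithinAt)
    (fun x hx ↦ (hf x (interior_subset hx)).hasDerivWithinAt) fun x hx ↦ hf' x (interior_subset hx)

lemma Convex.antitoneOn_of_hasDerivAt_nonpos {D : Set ℝ} (hD : Convex ℝ D) {f f' : ℝ → ℝ}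
    (hf : ∀ x ∈ D, HasDerivAt f (f' x) x) (hf' : ∀ x ∈ D, f' x ≤ 0) : AntitoneOn f D :=
  antitoneOn_of_hasDerivWithinAt_nonpos hD (fun x hx ↦ (hf x hx).continuousAt.continuousWithinAt)
    (fun x hx ↦ (hf x (interior_subset hx)).hasDerivWithinAt) fun x hx ↦ hf' x (interior_subset hx)

lemma Convex.isMinOn_of_hasDerivAt_eq_zero {D : Set ℝ} (hD : Convex ℝ D) {f f' : ℝ → ℝ} {a : ℝ}
    (hf : ∀ x ∈ D, HasDerivAt f (f' x) x) (hf' : MonotoneOn f' D) (ha : a ∈ D) (hfa : f' a = 0) :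
    IsMinOn f D a := by
  refine isMinOn_iff.2 fun x hx ↦ ?_
  rcases le_total x a with hxa | hax
  · exact (hD.inter (convex_Iic a)).antitoneOn_of_hasDerivAt_nonpos (fun y hy ↦ hf y hy.1)
      (fun y hy ↦ hfa ▸ hf' hy.1 ha hy.2) ⟨hx, hxa⟩ ⟨ha, mem_Iic.2 le_rfl⟩ hxa
  · exact (hD.inter (convex_Ici a)).monotoneOn_of_hasDerivAt_nonneg (fun y hy ↦ hf y hy.1)
      (fun y hy ↦ hfa ▸ hf' ha hy.1 hy.2) ⟨ha, mem_Ici.2 le_rfl⟩ ⟨hx, hax⟩ hax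

lemma HasDerivAt.nonneg_of_isMinOn_Ico {f : ℝ → ℝ} {f' a b : ℝ} (hf : HasDerivAt f f' a)
    (hab : a < b) (hmin : IsMinOn f (Ico a b) a) : 0 ≤ f' := by
  refine ge_of_tendsto (hasDerivAt_iff_tendsto_slope_left_right.1 hf).2 ?_
  filter_upwards [Ioo_mem_nhdsGT hab] with x hx
  rw [slope_def_field]
  exact div_nonneg (sub_nonneg.2 (isMinOn_iff.1 hmin x (Ioo_subset_Ico_self hx)))
    (sub_nonneg.2 hx.1.le)

/-- With the other member's revelation fixed, a member's loss as a function of their own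
revelation `α`, where `d = d_m` and `k = 2 d_m − λ(α_{−m}) d_{−m}`. -/
noncomputable def reducedLoss (lam c : ℝ → ℝ) (k d α : ℝ) : ℝ :=
  ((k - d * lam α) / 2) ^ 2 + c α

noncomputable def marginalLoss (lam lam' c' : ℝ → ℝ) (k d α : ℝ) : ℝ :=
  c' α - d * (k - d * lam α) * lam' α / 2

lemma lossA_eq_reducedLoss (lam c : ℝ → ℝ) (thA thB mu aA aB : ℝ) :
    lossA lam c thA thB mu aA aB =
      reducedLoss lam c (2 * (thA - mu) - lam aB * (thB - mu)) (thA - mu) aA := by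
  simp only [lossA, teamDec, reducedLoss]
  ring

lemma lossB_eq_reducedLoss (lam c : ℝ → ℝ) (thA thB mu aA aB : ℝ) :
    lossB lam c thA thB mu aA aB =
      reducedLoss lam c (2 * (thB - mu) - lam aA * (thA - mu)) (thB - mu) aB := by
  simp only [lossB, teamDec, reducedLoss]
  ring

section Marginal

variable {lam lam' c c' : ℝ → ℝ} {s : Set ℝ} {k d : ℝ}

lemma hasDerivAt_reducedLoss {α : ℝ} (k d : ℝ)
    (hlam : HasDerivAt lam (lam' α) α) (hc : HasDerivAt c (c' α) α) :
    HasDerivAt (reducedLoss lam c k d) (marginalLoss lam lam' c' k d α) α := by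
  have h := ((((hlam.const_mul d).const_sub k).div_const 2).pow 2).add hc
  refine h.congr_deriv ?_
  simp only [marginalLoss]
  ring

lemma marginalLoss_le_marginalLoss (hlam : MonotoneOn lam s) (hlam' : AntitoneOn lam' s)
    (hc' : MonotoneOn c' s) {x y : ℝ} (hx : x ∈ s) (hy : y ∈ s) (hxy : x ≤ y)
    (hlam'y : 0 ≤ lam' y) (hgain : 0 ≤ d * (k - d * lam y)) :
    marginalLoss lam lam' c' k d x ≤ marginalLoss lam lam' c' k d y := by
  have hgain_anti : d * (k - d * lam y) ≤ d * (k - d * lam x) := by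
    nlinarith [mul_nonneg (sq_nonneg d) (sub_nonneg.2 (hlam hx hy hxy))]
  have hbenefit := mul_le_mul hgain_anti (hlam' hx hy hxy) hlam'y (hgain.trans hgain_anti)
  have hcost := hc' hx hy hxy
  simp only [marginalLoss]
  linarith

lemma monotoneOn_marginalLoss (hlam : MonotoneOn lam s) (hlam' : AntitoneOn lam' s)
    (hc' : MonotoneOn c' s) (hlam_le : ∀ α ∈ s, lam α ≤ 1) (hlam'_nonneg : ∀ α ∈ s, 0 ≤ lam' α)
    (hdk : 0 ≤ d * (k - d)) : MonotoneOn (marginalLoss lam lam' c' k d) s :=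
  fun _ hx y hy hxy ↦ marginalLoss_le_marginalLoss hlam hlam' hc' hx hy hxy (hlam'_nonneg y hy)
    (by nlinarith [mul_nonneg (sq_nonneg d) (sub_nonneg.2 (hlam_le y hy))])

lemma marginalLoss_nonneg (hlam : MonotoneOn lam s) (hlam' : AntitoneOn lam' s)
    (hc' : MonotoneOn c' s) (hlam'_nonneg : ∀ α ∈ s, 0 ≤ lam' α) (hc'_nonneg : ∀ α ∈ s, 0 ≤ c' α)
    {a α : ℝ} (ha : a ∈ s) (hα : α ∈ s) (haα : a ≤ α) (h : 0 ≤ marginalLoss lam lam' c' k d a) :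
    0 ≤ marginalLoss lam lam' c' k d α := by
  rcases le_total (d * (k - d * lam α)) 0 with hgain | hgain
  · have := mul_nonpos_of_nonpos_of_nonneg hgain (hlam'_nonneg α hα)
    simp only [marginalLoss]
    linarith [hc'_nonneg α hα]
  · exact h.trans (marginalLoss_le_marginalLoss hlam hlam' hc' ha hα haα (hlam'_nonneg α hα) hgain)

lemma marginalLoss_zero_nonneg_iff (hlam0 : lam 0 = 0) (hlam'0 : 0 < lam' 0) :
    0 ≤ marginalLoss lam lam' c' k d 0 ↔ d * k / 2 ≤ c' 0 / lam' 0 := by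
  rw [le_div_iff₀ hlam'0, marginalLoss, hlam0]
  constructor <;> intro h <;> linarith

lemma marginalLoss_two_mul_eq_zero {α : ℝ} (hd : d ≠ 0) (hlam' : lam' α ≠ 0)
    (hf : fFun lam lam' c' d α = 2) : marginalLoss lam lam' c' (2 * d) d α = 0 := by
  simp only [fFun] at hf
  field_simp at hf
  simp only [marginalLoss]
  linear_combination hf / 2

lemma Convex.isMinOn_reducedLoss (hs : Convex ℝ s)
    (hlamDeriv : ∀ α ∈ s, HasDerivAt lam (lam' α) α) (hcDeriv : ∀ α ∈ s, HasDerivAt c (c' α) α)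
    (hlam : MonotoneOn lam s) (hlam' : AntitoneOn lam' s) (hc' : MonotoneOn c' s)
    (hlam_le : ∀ α ∈ s, lam α ≤ 1) (hlam'_nonneg : ∀ α ∈ s, 0 ≤ lam' α) (hdk : 0 ≤ d * (k - d))
    {a : ℝ} (ha : a ∈ s) (hcrit : marginalLoss lam lam' c' k d a = 0) :
    IsMinOn (reducedLoss lam c k d) s a :=
  hs.isMinOn_of_hasDerivAt_eq_zero
    (fun α hα ↦ hasDerivAt_reducedLoss k d (hlamDeriv α hα) (hcDeriv α hα))
    (monotoneOn_marginalLoss hlam hlam' hc' hlam_le hlam'_nonneg hdk) ha hcrit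

lemma isMinOn_reducedLoss_Ico_left_iff {a b : ℝ} (hab : a < b)
    (hlamDeriv : ∀ α ∈ Ico a b, HasDerivAt lam (lam' α) α)
    (hcDeriv : ∀ α ∈ Ico a b, HasDerivAt c (c' α) α) (hlam : MonotoneOn lam (Ico a b))
    (hlam' : AntitoneOn lam' (Ico a b)) (hc' : MonotoneOn c' (Ico a b))
    (hlam'_nonneg : ∀ α ∈ Ico a b, 0 ≤ lam' α) (hc'_nonneg : ∀ α ∈ Ico a b, 0 ≤ c' α) :
    IsMinOn (reducedLoss lam c k d) (Ico a b) a ↔ 0 ≤ marginalLoss lam lam' c' k d a := by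
  have hderiv (α : ℝ) (hα : α ∈ Ico a b) :=
    hasDerivAt_reducedLoss k d (hlamDeriv α hα) (hcDeriv α hα)
  have ha : a ∈ Ico a b := left_mem_Ico.2 hab
  refine ⟨fun h ↦ (hderiv a ha).nonneg_of_isMinOn_Ico hab h, fun h ↦ isMinOn_iff.2 fun x hx ↦ ?_⟩
  exact (convex_Ico a b).monotoneOn_of_hasDerivAt_nonneg hderiv
    (fun α hα ↦ marginalLoss_nonneg hlam hlam' hc' hlam'_nonneg hc'_nonneg ha hα hα.1 h) ha hx hx.1

end Marginal

theorem OPR_equilibrium_iff_general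
    (lam lam' c c' : ℝ → ℝ)
    (hlamDeriv : ∀ α ∈ Set.Icc (0:ℝ) 1, HasDerivAt lam (lam' α) α)
    (hlam0 : lam 0 = 0) (hlam1 : lam 1 = 1)
    (hlam'pos : ∀ α ∈ Set.Icc (0:ℝ) 1, 0 < lam' α)
    (hlam'anti : ∀ x ∈ Set.Icc (0:ℝ) 1, ∀ y ∈ Set.Icc (0:ℝ) 1, x ≤ y → lam' y ≤ lam' x)
    (hcDeriv : ∀ α ∈ Set.Ico (0:ℝ) 1, HasDerivAt c (c' α) α)
    (hc'nonneg : ∀ α ∈ Set.Ico (0:ℝ) 1, 0 ≤ c' α)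
    (hc'strictMono : ∀ x ∈ Set.Ico (0:ℝ) 1, ∀ y ∈ Set.Ico (0:ℝ) 1, x < y → c' x < c' y)
    (thA thB muG dA dB : ℝ)
    (hdA : dA = thA - muG) (hdB : dB = thB - muG)
    (hdAne : dA ≠ 0)
    (aA0 : ℝ) (haA0 : aA0 ∈ Set.Ioo (0:ℝ) 1) (hfaA0 : fFun lam lam' c' dA aA0 = 2) :
    IsNashEq lam c thA thB muG aA0 0 ↔
      c' 0 / lam' 0 ≥ dB ^ 2 - lam aA0 * dA * dB / 2 := by
  have hIco : Ico (0:ℝ) 1 ⊆ Icc 0 1 := Ico_subset_Icc_self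
  have hmem : aA0 ∈ Ico (0:ℝ) 1 := Ioo_subset_Ico_self haA0
  have hlam : MonotoneOn lam (Icc 0 1) :=
    (convex_Icc 0 1).monotoneOn_of_hasDerivAt_nonneg hlamDeriv fun α hα ↦ (hlam'pos α hα).le
  have hlamDeriv' : ∀ α ∈ Ico (0:ℝ) 1, HasDerivAt lam (lam' α) α :=
    fun α hα ↦ hlamDeriv α (hIco hα)
  have hlam' : AntitoneOn lam' (Ico 0 1) := fun x hx y hy ↦ hlam'anti x (hIco hx) y (hIco hy)
  have hc' : MonotoneOn c' (Ico 0 1) := StrictMonoOn.monotoneOn hc'strictMono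
  have hlam'_nonneg : ∀ α ∈ Ico (0:ℝ) 1, 0 ≤ lam' α := fun α hα ↦ (hlam'pos α (hIco hα)).le
  have hAlice : IsMinOn (reducedLoss lam c (2 * dA) dA) (Ico 0 1) aA0 :=
    (convex_Ico 0 1).isMinOn_reducedLoss hlamDeriv' hcDeriv (hlam.mono hIco) hlam' hc'
      (fun α hα ↦ hlam1 ▸ hlam (hIco hα) (right_mem_Icc.2 zero_le_one) hα.2.le) hlam'_nonneg
      (by nlinarith [sq_nonneg dA]) hmem
      (marginalLoss_two_mul_eq_zero hdAne (hlam'pos aA0 (hIco hmem)).ne' hfaA0)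
  have hA (α : ℝ) : lossA lam c thA thB muG α 0 = reducedLoss lam c (2 * dA) dA α := by
    rw [lossA_eq_reducedLoss, hlam0, ← hdA, ← hdB, zero_mul, sub_zero]
  have hB (α : ℝ) : lossB lam c thA thB muG aA0 α =
      reducedLoss lam c (2 * dB - lam aA0 * dA) dB α := by
    rw [lossB_eq_reducedLoss, ← hdA, ← hdB]
  rw [ge_iff_le, show dB ^ 2 - lam aA0 * dA * dB / 2 = dB * (2 * dB - lam aA0 * dA) / 2 by ring,
    ← marginalLoss_zero_nonneg_iff hlam0 (hlam'pos 0 (left_mem_Icc.2 zero_le_one)),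
    ← isMinOn_reducedLoss_Ico_left_iff one_pos hlamDeriv' hcDeriv (hlam.mono hIco) hlam' hc'
      hlam'_nonneg hc'nonneg]
  simp only [IsNashEq, hA, hB]
  exact ⟨fun h ↦ h.2.2.2, fun h ↦ ⟨hmem, left_mem_Ico.2 one_pos, hAlice, h⟩⟩

/-- OPR equilibrium characterization. Assume `p < d_A²` and let
`α_A⁰ ∈ (0,1)` solve `f_A(α) = 2`. Then `(α_A⁰, 0)` is a Nash equilibrium iff
`p ≥ d_B² − λ(α_A⁰)·d_A·d_B/2`. -/
theorem OPR_equilibrium_iff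
    (lam lam' c c' : ℝ → ℝ)
    (hlamDeriv : ∀ α ∈ Set.Icc (0:ℝ) 1, HasDerivAt lam (lam' α) α)
    (hlam'Cont : ContinuousOn lam' (Set.Icc (0:ℝ) 1))
    (hlam0 : lam 0 = 0) (hlam1 : lam 1 = 1)
    (hlam'pos : ∀ α ∈ Set.Icc (0:ℝ) 1, 0 < lam' α)
    (hlam'anti : ∀ x ∈ Set.Icc (0:ℝ) 1, ∀ y ∈ Set.Icc (0:ℝ) 1, x ≤ y → lam' y ≤ lam' x)
    (hcDeriv : ∀ α ∈ Set.Ico (0:ℝ) 1, HasDerivAt c (c' α) α)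
    (hc'Cont : ContinuousOn c' (Set.Ico (0:ℝ) 1))
    (hc0 : c 0 = 0)
    (hc'nonneg : ∀ α ∈ Set.Ico (0:ℝ) 1, 0 ≤ c' α)
    (hc'strictMono : ∀ x ∈ Set.Ico (0:ℝ) 1, ∀ y ∈ Set.Ico (0:ℝ) 1, x < y → c' x < c' y)
    (hc'top : Filter.Tendsto c' (nhdsWithin 1 (Set.Iio 1)) Filter.atTop)
    (thA thB muG dA dB : ℝ)
    (hdA : dA = thA - muG) (hdB : dB = thB - muG)
    (hdAne : dA ≠ 0) (hdBne : dB ≠ 0)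
    (hp : c' 0 / lam' 0 < dA ^ 2)
    (aA0 : ℝ) (haA0 : aA0 ∈ Set.Ioo (0:ℝ) 1) (hfaA0 : fFun lam lam' c' dA aA0 = 2) :
    IsNashEq lam c thA thB muG aA0 0 ↔
      c' 0 / lam' 0 ≥ dB ^ 2 - lam aA0 * dA * dB / 2 :=
  OPR_equilibrium_iff_general lam lam' c c' hlamDeriv hlam0 hlam1 hlam'pos hlam'anti hcDeriv
    hc'nonneg hc'strictMono thA thB muG dA dB hdA hdB hdAne aA0 haA0 hfaA0
end

section
/- (BPR equilibrium characterization.) Assume d_A ≠ 0 and d_B ≠ 0. A profile (α_A*, α_B*) with α_A*, α_B* ∈ (0,1) is a Nash equilibrium of the digital representative game if and only if it satisfies the pair of first-order conditions f_A(α_A*) = h_A(α_B*) and f_B(α_B*) = h_B(α_A*). -/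
open Set Filter

/-!
Measured from the GenAI prior, a member with diversity `d` whose partner pulls the team
decision by `s = λ(α_{-m}) d_{-m}` has loss `(d - (λ(x) d + s)/2)² + c(x)`, whose derivative is
`c'(x) - g(x) λ'(x)` with marginal gain `g(x) = (d - (λ(x) d + s)/2) d`. Since `λ` is increasing,
`g` is antitone, and at a critical point `a` we have `g(a) λ'(a) = c'(a) ≥ 0`. As `λ'` is
positive and antitone and `c'` is increasing, `c' - g λ'` is then `≤ 0` left of `a` and `≥ 0`
right of `a`, so every interior critical point is a best response. Rewriting `c'(a) = g(a) λ'(a)`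
gives exactly `f_m(a) = h_m(α_{-m})`.
-/

noncomputable def memberLoss (lam c : ℝ → ℝ) (d s x : ℝ) : ℝ :=
  (d - (lam x * d + s) / 2) ^ 2 + c x

noncomputable def marginalGain (lam : ℝ → ℝ) (d s x : ℝ) : ℝ :=
  (d - (lam x * d + s) / 2) * d

lemma lossA_eq_memberLoss (lam c : ℝ → ℝ) (thA thB mu x y : ℝ) :
    lossA lam c thA thB mu x y = memberLoss lam c (thA - mu) (lam y * (thB - mu)) x := by
  simp only [lossA, memberLoss, teamDec]
  ring

lemma lossB_eq_memberLoss (lam c : ℝ → ℝ) (thA thB mu x y : ℝ) :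
    lossB lam c thA thB mu x y = memberLoss lam c (thB - mu) (lam x * (thA - mu)) y := by
  simp only [lossB, memberLoss, teamDec]
  ring

section MemberLoss

variable {lam lam' c c' : ℝ → ℝ} {d s : ℝ}

lemma hasDerivAt_memberLoss {x l k : ℝ} (hlam : HasDerivAt lam l x) (hc : HasDerivAt c k x) :
    HasDerivAt (memberLoss lam c d s) (k - marginalGain lam d s x * l) x := by
  have h := (((hlam.mul_const d).add_const s).div_const 2).const_sub d |>.pow 2 |>.add hc
  refine h.congr_deriv ?_
  simp only [marginalGain]
  push_cast
  ring

lemma marginalGain_antitoneOn {S : Set ℝ} (hlam : MonotoneOn lam S) :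
    AntitoneOn (marginalGain lam d s) S := by
  intro x hx y hy hxy
  have := mul_le_mul_of_nonneg_right (hlam hx hy hxy) (sq_nonneg d)
  simp only [marginalGain]
  nlinarith

lemma fFun_eq_iff {a : ℝ} (hd : d ≠ 0) (hlam' : lam' a ≠ 0) :
    fFun lam lam' c' d a = 2 - s / d ↔ c' a = marginalGain lam d s a * lam' a := by
  simp only [fFun, marginalGain]
  constructor <;> intro h
  · field_simp at h
    linear_combination h / 2
  · field_simp
    linear_combination 2 * h

variable {p q : ℝ}

lemma isMinOn_memberLoss_of_critical {a : ℝ}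
    (hlam : ∀ x ∈ Ico p q, HasDerivAt lam (lam' x) x) (hlam'pos : ∀ x ∈ Ico p q, 0 < lam' x)
    (hlam'anti : AntitoneOn lam' (Ico p q)) (hc : ∀ x ∈ Ico p q, HasDerivAt c (c' x) x)
    (hc'a : 0 ≤ c' a) (hc'mono : MonotoneOn c' (Ico p q)) (ha : a ∈ Ioo p q)
    (hcrit : c' a = marginalGain lam d s a * lam' a) :
    IsMinOn (memberLoss lam c d s) (Ico p q) a := by
  set g := marginalGain lam d s
  have haI : a ∈ Ico p q := Ioo_subset_Ico_self ha
  have hF : ∀ x ∈ Ico p q, HasDerivAt (memberLoss lam c d s) (c' x - g x * lam' x) x :=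
    fun x hx => hasDerivAt_memberLoss (hlam x hx) (hc x hx)
  have hlamMono : MonotoneOn lam (Ico p q) :=
    monotoneOn_of_hasDerivWithinAt_nonneg (convex_Ico p q)
      (fun x hx => (hlam x hx).continuousAt.continuousWithinAt)
      (fun x hx => (hlam x (interior_subset hx)).hasDerivWithinAt)
      (fun x hx => (hlam'pos x (interior_subset hx)).le)
  have hg : AntitoneOn g (Ico p q) := marginalGain_antitoneOn hlamMono
  have hga : 0 ≤ g a := nonneg_of_mul_nonneg_left (hcrit ▸ hc'a) (hlam'pos a haI)
  have hleft : Ioo p a ⊆ Ico p q := fun x hx => ⟨hx.1.le, hx.2.trans ha.2⟩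
  have hright : Ioo a q ⊆ Ico p q := fun x hx => ⟨ha.1.le.trans hx.1.le, hx.2⟩
  refine isMinOn_Ico_of_deriv (hF p ⟨le_rfl, ha.1.trans ha.2⟩).continuousAt
    (hF a haI).continuousAt
    (fun x hx => (hF x (hleft hx)).differentiableAt.differentiableWithinAt)
    (fun x hx => (hF x (hright hx)).differentiableAt.differentiableWithinAt) ?_ ?_
  · intro x hx
    have hxI := hleft hx
    rw [(hF x hxI).deriv, sub_nonpos]
    calc c' x ≤ c' a := hc'mono hxI haI hx.2.le
      _ = g a * lam' a := hcrit
      _ ≤ g x * lam' x := mul_le_mul (hg hxI haI hx.2.le) (hlam'anti hxI haI hx.2.le)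
          (hlam'pos a haI).le (hga.trans (hg hxI haI hx.2.le))
  · intro x hx
    have hxI := hright hx
    rw [(hF x hxI).deriv, sub_nonneg]
    calc g x * lam' x ≤ g a * lam' a := by
          rcases le_total (g x) 0 with hgx | hgx
          · exact (mul_nonpos_of_nonpos_of_nonneg hgx (hlam'pos x hxI).le).trans
              (mul_nonneg hga (hlam'pos a haI).le)
          · exact mul_le_mul (hg haI hxI hx.1.le) (hlam'anti haI hxI hx.1.le)
              (hlam'pos x hxI).le hga
      _ = c' a := hcrit.symm
      _ ≤ c' x := hc'mono haI hxI hx.1.le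

lemma isMinOn_memberLoss_iff {a : ℝ}
    (hlam : ∀ x ∈ Ico p q, HasDerivAt lam (lam' x) x) (hlam'pos : ∀ x ∈ Ico p q, 0 < lam' x)
    (hlam'anti : AntitoneOn lam' (Ico p q)) (hc : ∀ x ∈ Ico p q, HasDerivAt c (c' x) x)
    (hc'a : 0 ≤ c' a) (hc'mono : MonotoneOn c' (Ico p q)) (hd : d ≠ 0) (ha : a ∈ Ioo p q) :
    IsMinOn (memberLoss lam c d s) (Ico p q) a ↔ fFun lam lam' c' d a = 2 - s / d := by
  have haI : a ∈ Ico p q := Ioo_subset_Ico_self ha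
  rw [fFun_eq_iff hd (hlam'pos a haI).ne']
  refine ⟨fun hmin => ?_,
    isMinOn_memberLoss_of_critical hlam hlam'pos hlam'anti hc hc'a hc'mono ha⟩
  have hloc := hmin.isLocalMin (Ico_mem_nhds ha.1 ha.2)
  exact sub_eq_zero.mp (hloc.hasDerivAt_eq_zero (hasDerivAt_memberLoss (hlam a haI) (hc a haI)))

end MemberLoss

theorem BPR_equilibrium_iff_general
    (lam lam' c c' : ℝ → ℝ)
    (hlamDeriv : ∀ α ∈ Set.Icc (0:ℝ) 1, HasDerivAt lam (lam' α) α)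
    (hlam'pos : ∀ α ∈ Set.Icc (0:ℝ) 1, 0 < lam' α)
    (hlam'anti : ∀ x ∈ Set.Icc (0:ℝ) 1, ∀ y ∈ Set.Icc (0:ℝ) 1, x ≤ y → lam' y ≤ lam' x)
    (hcDeriv : ∀ α ∈ Set.Ico (0:ℝ) 1, HasDerivAt c (c' α) α)
    (hc'nonneg : ∀ α ∈ Set.Ico (0:ℝ) 1, 0 ≤ c' α)
    (hc'strictMono : ∀ x ∈ Set.Ico (0:ℝ) 1, ∀ y ∈ Set.Ico (0:ℝ) 1, x < y → c' x < c' y)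
    (thA thB muG dA dB : ℝ)
    (hdA : dA = thA - muG) (hdB : dB = thB - muG)
    (hdAne : dA ≠ 0) (hdBne : dB ≠ 0)
    (aA aB : ℝ) (haA : aA ∈ Set.Ioo (0:ℝ) 1) (haB : aB ∈ Set.Ioo (0:ℝ) 1) :
    IsNashEq lam c thA thB muG aA aB ↔
      (fFun lam lam' c' dA aA = hFun lam dA dB aB ∧
       fFun lam lam' c' dB aB = hFun lam dB dA aA) := by
  subst hdA hdB
  have hIco : Ico (0:ℝ) 1 ⊆ Icc 0 1 := Ico_subset_Icc_self
  have hc'mono : StrictMonoOn c' (Ico 0 1) := fun x hx y hy => hc'strictMono x hx y hy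
  have hbest : ∀ d s a, d ≠ 0 → a ∈ Ioo (0:ℝ) 1 →
      (IsMinOn (memberLoss lam c d s) (Ico 0 1) a ↔ fFun lam lam' c' d a = 2 - s / d) :=
    fun d s a hd ha => isMinOn_memberLoss_iff (fun x hx => hlamDeriv x (hIco hx))
      (fun x hx => hlam'pos x (hIco hx)) (fun x hx y hy => hlam'anti x (hIco hx) y (hIco hy))
      hcDeriv (hc'nonneg a (Ioo_subset_Ico_self ha)) hc'mono.monotoneOn hd ha
  simp only [IsNashEq, lossA_eq_memberLoss, lossB_eq_memberLoss, ← isMinOn_iff,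
    hbest _ _ _ hdAne haA, hbest _ _ _ hdBne haB, hFun, Ioo_subset_Ico_self haA,
    Ioo_subset_Ico_self haB, true_and]

/-- BPR equilibrium characterization. An interior profile
`(α_A*, α_B*) ∈ (0,1)²` is a Nash equilibrium iff it satisfies the first-order conditions
`f_A(α_A*) = h_A(α_B*)` and `f_B(α_B*) = h_B(α_A*)`. -/
theorem BPR_equilibrium_iff
    (lam lam' c c' : ℝ → ℝ)
    (hlamDeriv : ∀ α ∈ Set.Icc (0:ℝ) 1, HasDerivAt lam (lam' α) α)
    (hlam'Cont : ContinuousOn lam' (Set.Icc (0:ℝ) 1))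
    (hlam0 : lam 0 = 0) (hlam1 : lam 1 = 1)
    (hlam'pos : ∀ α ∈ Set.Icc (0:ℝ) 1, 0 < lam' α)
    (hlam'anti : ∀ x ∈ Set.Icc (0:ℝ) 1, ∀ y ∈ Set.Icc (0:ℝ) 1, x ≤ y → lam' y ≤ lam' x)
    (hcDeriv : ∀ α ∈ Set.Ico (0:ℝ) 1, HasDerivAt c (c' α) α)
    (hc'Cont : ContinuousOn c' (Set.Ico (0:ℝ) 1))
    (hc0 : c 0 = 0)
    (hc'nonneg : ∀ α ∈ Set.Ico (0:ℝ) 1, 0 ≤ c' α)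
    (hc'strictMono : ∀ x ∈ Set.Ico (0:ℝ) 1, ∀ y ∈ Set.Ico (0:ℝ) 1, x < y → c' x < c' y)
    (hc'top : Filter.Tendsto c' (nhdsWithin 1 (Set.Iio 1)) Filter.atTop)
    (thA thB muG dA dB : ℝ)
    (hdA : dA = thA - muG) (hdB : dB = thB - muG)
    (hdAne : dA ≠ 0) (hdBne : dB ≠ 0)
    (aA aB : ℝ) (haA : aA ∈ Set.Ioo (0:ℝ) 1) (haB : aB ∈ Set.Ioo (0:ℝ) 1) :
    IsNashEq lam c thA thB muG aA aB ↔
      (fFun lam lam' c' dA aA = hFun lam dA dB aB ∧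
       fFun lam lam' c' dB aB = hFun lam dB dA aA) :=
  BPR_equilibrium_iff_general lam lam' c c' hlamDeriv hlam'pos hlam'anti hcDeriv hc'nonneg
    hc'strictMono thA thB muG dA dB hdA hdB hdAne hdBne aA aB haA haB
end

section
/- (Proposition 2: OPR revelation increases with diversity.) Let d₁, d₂ ∈ ℝ with 0 < p < d₁² < d₂². For i = 1, 2, let α_i ∈ (0,1) be the unique solution of λ(α) + (2/d_i²)·c'(α)/λ'(α) = 2. Then α₁ < α₂; that is, when only one member reveals information at equilibrium, the revelation level strictly increases with that member's diversity |d|. -/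
open Set Filter

/-- Proposition 2: OPR revelation increases with diversity. If
`0 < p < d₁² < d₂²` and `α_i ∈ (0,1)` solves `λ(α) + (2/d_i²)c'(α)/λ'(α) = 2`, then
`α₁ < α₂`. -/
theorem OPR_revelation_strictMono_in_diversity
    (lam lam' c c' : ℝ → ℝ)
    (hlamDeriv : ∀ α ∈ Set.Icc (0:ℝ) 1, HasDerivAt lam (lam' α) α)
    (hlam'Cont : ContinuousOn lam' (Set.Icc (0:ℝ) 1))
    (hlam0 : lam 0 = 0) (hlam1 : lam 1 = 1)
    (hlam'pos : ∀ α ∈ Set.Icc (0:ℝ) 1, 0 < lam' α)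
    (hlam'anti : ∀ x ∈ Set.Icc (0:ℝ) 1, ∀ y ∈ Set.Icc (0:ℝ) 1, x ≤ y → lam' y ≤ lam' x)
    (hcDeriv : ∀ α ∈ Set.Ico (0:ℝ) 1, HasDerivAt c (c' α) α)
    (hc'Cont : ContinuousOn c' (Set.Ico (0:ℝ) 1))
    (hc0 : c 0 = 0)
    (hc'nonneg : ∀ α ∈ Set.Ico (0:ℝ) 1, 0 ≤ c' α)
    (hc'strictMono : ∀ x ∈ Set.Ico (0:ℝ) 1, ∀ y ∈ Set.Ico (0:ℝ) 1, x < y → c' x < c' y)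
    (hc'top : Filter.Tendsto c' (nhdsWithin 1 (Set.Iio 1)) Filter.atTop)
    (d1 d2 : ℝ)
    (hp0 : 0 < c' 0 / lam' 0) (hpd1 : c' 0 / lam' 0 < d1 ^ 2) (hd12 : d1 ^ 2 < d2 ^ 2)
    (a1 a2 : ℝ) (ha1 : a1 ∈ Set.Ioo (0:ℝ) 1) (ha2 : a2 ∈ Set.Ioo (0:ℝ) 1)
    (hfa1 : fFun lam lam' c' d1 a1 = 2) (hfa2 : fFun lam lam' c' d2 a2 = 2) :
    a1 < a2 := by
  by_contra hcon
  push_neg at hcon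
  obtain ⟨ha10, ha11⟩ := ha1
  obtain ⟨ha20, ha21⟩ := ha2
  have ha1I : a1 ∈ Set.Icc (0:ℝ) 1 := ⟨ha10.le, ha11.le⟩
  have ha2I : a2 ∈ Set.Icc (0:ℝ) 1 := ⟨ha20.le, ha21.le⟩
  have ha1o : a1 ∈ Set.Ico (0:ℝ) 1 := ⟨ha10.le, ha11⟩
  have ha2o : a2 ∈ Set.Ico (0:ℝ) 1 := ⟨ha20.le, ha21⟩
  have h0I : (0:ℝ) ∈ Set.Icc (0:ℝ) 1 := ⟨le_refl 0, zero_le_one⟩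
  have h0o : (0:ℝ) ∈ Set.Ico (0:ℝ) 1 := ⟨le_refl 0, zero_lt_one⟩
  have hl0 : 0 < lam' 0 := hlam'pos 0 h0I
  have hc'0 : 0 < c' 0 := by
    have := mul_pos hp0 hl0
    rwa [div_mul_cancel₀ _ (ne_of_gt hl0)] at this
  have hd1sq : 0 < d1 ^ 2 := lt_trans hp0 hpd1
  have hd2sq : 0 < d2 ^ 2 := lt_trans hd1sq hd12
  have hl1 : 0 < lam' a1 := hlam'pos a1 ha1I
  have hl2 : 0 < lam' a2 := hlam'pos a2 ha2I
  have hc'a1 : 0 < c' a1 := lt_trans hc'0 (hc'strictMono 0 h0o a1 ha1o ha10)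
  have hratio1 : 0 < c' a1 / lam' a1 := div_pos hc'a1 hl1
  -- c'(a2) ≤ c'(a1)
  have hc'le : c' a2 ≤ c' a1 := by
    rcases eq_or_lt_of_le hcon with h | h
    · rw [h]
    · exact (hc'strictMono a2 ha2o a1 ha1o h).le
  have hl'le : lam' a1 ≤ lam' a2 := hlam'anti a2 ha2I a1 ha1I hcon
  have hratio_le : c' a2 / lam' a2 ≤ c' a1 / lam' a1 :=
    div_le_div₀ (hc'a1.le) hc'le hl1 hl'le
  -- lam a2 ≤ lam a1
  have hlamMono : StrictMonoOn lam (Set.Icc (0:ℝ) 1) := by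
    apply strictMonoOn_of_hasDerivWithinAt_pos (convex_Icc 0 1)
      (fun x hx => (hlamDeriv x hx).continuousAt.continuousWithinAt)
      (fun x hx => ((hlamDeriv x (interior_subset hx)).hasDerivWithinAt))
      (fun x hx => hlam'pos x (interior_subset hx))
  have hlamle : lam a2 ≤ lam a1 := by
    rcases eq_or_lt_of_le hcon with h | h
    · rw [h]
    · exact (hlamMono ha2I ha1I h).le
  -- f_{d2}(a2) ≤ f_{d2}(a1)
  have hstep1 : fFun lam lam' c' d2 a2 ≤ fFun lam lam' c' d2 a1 := by
    unfold fFun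
    have h2d2 : 0 < 2 / d2 ^ 2 := div_pos two_pos hd2sq
    have := mul_le_mul_of_nonneg_left hratio_le h2d2.le
    linarith
  -- f_{d2}(a1) < f_{d1}(a1)
  have hstep2 : fFun lam lam' c' d2 a1 < fFun lam lam' c' d1 a1 := by
    unfold fFun
    have hdiv : 2 / d2 ^ 2 < 2 / d1 ^ 2 := div_lt_div_of_pos_left two_pos hd1sq hd12
    have := mul_lt_mul_of_pos_right hdiv hratio1
    linarith
  have : (2:ℝ) < 2 := by
    calc (2:ℝ) = fFun lam lam' c' d2 a2 := hfa2.symm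
    _ ≤ fFun lam lam' c' d2 a1 := hstep1
    _ < fFun lam lam' c' d1 a1 := hstep2
    _ = 2 := hfa1
  exact lt_irrefl 2 this
end

section
/- (Proposition 3(1): BPR comparative statics under aligned preferences.) Assume λ and c are twice continuously differentiable on their domains, fix d_B > 0, and let I ⊆ (0, +∞) be an open interval. Suppose a, b : I → (0,1) are differentiable functions such that for every t ∈ I the profile (a(t), b(t)) is an interior Nash equilibrium for parameters d_A = t and d_B, i.e., λ(a(t)) + (2/t²)·c'(a(t))/λ'(a(t)) = 2 − λ(b(t))·d_B/t and λ(b(t)) + (2/d_B²)·c'(b(t))/λ'(b(t)) = 2 − λ(a(t))·t/d_B for all t ∈ I. Then a'(t) > 0 and b'(t) < 0 on I: each member's equilibrium revelation increases with their own diversity and decreases with the other member's diversity. -/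
open Set Filter

/-!
Differentiating both first-order conditions along the path gives a linear system for
`(a', b')`. Put `g = c' / λ'`; it is nondecreasing because `c'` is nondecreasing and `λ'`
nonincreasing. Hence the diagonal coefficients `λ'(a) + 2 g'(a) / t²` and
`λ'(b) + 2 g'(b) / d_B²` are at least `λ'(a)` and `λ'(b)`, whose product is the product of the
off-diagonal coefficients, so the determinant is nonnegative. The right-hand side has signs
`(+, -)` because `λ > 0` on `(0, 1)`, so eliminating `b'` gives `a' > 0`, and then the second
equation gives `b' < 0`.
-/

open Topology

theorem HasDerivAt.nonneg_of_monotoneOn_of_mem_nhds {f : ℝ → ℝ} {f' x : ℝ} {s : Set ℝ}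
    (hf : HasDerivAt f f' x) (hs : s ∈ 𝓝 x) (hmono : MonotoneOn f s) : 0 ≤ f' := by
  refine hf.hasDerivWithinAt.nonneg_of_monotoneOn ?_ hmono
  simpa using (PerfectSpace.univ_preperfect x (mem_univ x)).nhds_inter hs

theorem HasDerivAt.nonpos_of_antitoneOn_of_mem_nhds {f : ℝ → ℝ} {f' x : ℝ} {s : Set ℝ}
    (hf : HasDerivAt f f' x) (hs : s ∈ 𝓝 x) (hanti : AntitoneOn f s) : f' ≤ 0 := by
  simpa using hf.neg.nonneg_of_monotoneOn_of_mem_nhds hs hanti.neg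

theorem exists_hasDerivAt_div_nonneg {u v : ℝ → ℝ} {u' v' x : ℝ} {s : Set ℝ} (hs : s ∈ 𝓝 x)
    (hu : HasDerivAt u u' x) (hv : HasDerivAt v v' x) (humono : MonotoneOn u s)
    (hvanti : AntitoneOn v s) (hux : 0 ≤ u x) (hvx : 0 < v x) :
    ∃ q, HasDerivAt (fun y => u y / v y) q x ∧ 0 ≤ q := by
  refine ⟨_, hu.div hv hvx.ne', div_nonneg ?_ (sq_nonneg _)⟩
  have hu' := hu.nonneg_of_monotoneOn_of_mem_nhds hs humono
  have hv' := hv.nonpos_of_antitoneOn_of_mem_nhds hs hvanti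
  nlinarith [mul_nonneg hu' hvx.le, mul_nonneg hux (neg_nonneg.2 hv')]

theorem pos_and_neg_of_linear_system {P Q β γ r s x y : ℝ} (hQ : 0 < Q) (hβ : 0 ≤ β)
    (hγ : 0 ≤ γ) (hdet : β * γ ≤ P * Q) (hr : 0 < r) (hs : 0 < s)
    (h₁ : P * x + β * y = r) (h₂ : γ * x + Q * y = -s) : 0 < x ∧ y < 0 := by
  have hcramer : x * (P * Q - β * γ) = r * Q + β * s := by
    linear_combination Q * h₁ - β * h₂
  have hx : 0 < x := by
    by_contra! hx
    nlinarith [mul_nonpos_of_nonpos_of_nonneg hx (sub_nonneg.2 hdet), mul_pos hr hQ,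
      mul_nonneg hβ hs.le]
  exact ⟨hx, by nlinarith [mul_nonneg hγ hx.le]⟩

theorem comparative_statics_of_foc {lam g a b : ℝ → ℝ} {dB t la lb ga gb a' b' : ℝ}
    (ht : 0 < t) (hdB : 0 < dB)
    (hlamA : HasDerivAt lam la (a t)) (hlamB : HasDerivAt lam lb (b t))
    (hgA : HasDerivAt g ga (a t)) (hgB : HasDerivAt g gb (b t))
    (ha : HasDerivAt a a' t) (hb : HasDerivAt b b' t)
    (hfocA : ∀ᶠ s in 𝓝 t, lam (a s) + 2 / s ^ 2 * g (a s) = 2 - lam (b s) * dB / s)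
    (hfocB : ∀ᶠ s in 𝓝 t, lam (b s) + 2 / dB ^ 2 * g (b s) = 2 - lam (a s) * s / dB)
    (hla : 0 < la) (hlb : 0 < lb) (hga : 0 ≤ ga) (hgb : 0 ≤ gb) (hgat : 0 ≤ g (a t))
    (hlamat : 0 < lam (a t)) (hlambt : 0 < lam (b t)) :
    0 < a' ∧ b' < 0 := by
  have hlam_a := hlamA.comp t ha
  have hlam_b := hlamB.comp t hb
  have hlhsA : HasDerivAt (fun s => lam (a s) + 2 / s ^ 2 * g (a s))
      (la * a' - 4 / t ^ 3 * g (a t) + 2 / t ^ 2 * (ga * a')) t := by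
    refine (hlam_a.add (((hasDerivAt_const t 2).div (hasDerivAt_pow 2 t)
      (by positivity)).mul (hgA.comp t ha))).congr_deriv ?_
    simp only [Function.comp_apply, Pi.div_apply]
    field_simp
    ring
  have hrhsA : HasDerivAt (fun s => 2 - lam (b s) * dB / s)
      (-(lb * b' * dB / t) + lam (b t) * dB / t ^ 2) t := by
    refine ((hasDerivAt_const t 2).sub ((hlam_b.mul_const dB).div (hasDerivAt_id t)
      ht.ne')).congr_deriv ?_
    simp only [Function.comp_apply, id]
    field_simp
    ring
  have hlhsB : HasDerivAt (fun s => lam (b s) + 2 / dB ^ 2 * g (b s))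
      (lb * b' + 2 / dB ^ 2 * (gb * b')) t :=
    hlam_b.add ((hgB.comp t hb).const_mul _)
  have hrhsB : HasDerivAt (fun s => 2 - lam (a s) * s / dB)
      (-((la * a' * t + lam (a t)) / dB)) t := by
    refine ((hasDerivAt_const t 2).sub
      ((hlam_a.mul (hasDerivAt_id t)).div_const dB)).congr_deriv ?_
    simp only [Function.comp_apply, id]
    ring
  have eqA := hlhsA.unique (hrhsA.congr_of_eventuallyEq hfocA)
  have eqB := hlhsB.unique (hrhsB.congr_of_eventuallyEq hfocB)
  have hdet : dB * lb / t * (t * la / dB) ≤ (la + 2 / t ^ 2 * ga) * (lb + 2 / dB ^ 2 * gb) :=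
    calc dB * lb / t * (t * la / dB) = la * lb := by field_simp
      _ ≤ _ := mul_le_mul (by simp only [le_add_iff_nonneg_right]; positivity)
          (by simp only [le_add_iff_nonneg_right]; positivity) hlb.le (by positivity)
  exact pos_and_neg_of_linear_system (by positivity) (by positivity) (by positivity) hdet
    (r := 4 / t ^ 3 * g (a t) + lam (b t) * dB / t ^ 2) (by positivity)
    (s := lam (a t) / dB) (by positivity) (by linear_combination eqA) (by linear_combination eqB)

theorem BPR_comparative_statics_aligned_general
    (lam lam' c' : ℝ → ℝ)
    (hlamDeriv : ∀ α ∈ Set.Icc (0:ℝ) 1, HasDerivAt lam (lam' α) α)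
    (hlam0 : lam 0 = 0)
    (hlam'pos : ∀ α ∈ Set.Icc (0:ℝ) 1, 0 < lam' α)
    (hlam'anti : ∀ x ∈ Set.Icc (0:ℝ) 1, ∀ y ∈ Set.Icc (0:ℝ) 1, x ≤ y → lam' y ≤ lam' x)
    (hc'nonneg : ∀ α ∈ Set.Ico (0:ℝ) 1, 0 ≤ c' α)
    (hc'strictMono : ∀ x ∈ Set.Ico (0:ℝ) 1, ∀ y ∈ Set.Ico (0:ℝ) 1, x < y → c' x < c' y)
    (lam'' c'' : ℝ → ℝ)
    (hlam'Deriv : ∀ α ∈ Set.Icc (0:ℝ) 1, HasDerivAt lam' (lam'' α) α)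
    (hc'Deriv : ∀ α ∈ Set.Ico (0:ℝ) 1, HasDerivAt c' (c'' α) α)
    (dB : ℝ) (hdB : 0 < dB)
    (lo hi : ℝ) (hsub : Set.Ioo lo hi ⊆ Set.Ioi (0:ℝ))
    (a a' b b' : ℝ → ℝ)
    (hda : ∀ t ∈ Set.Ioo lo hi, HasDerivAt a (a' t) t)
    (hdb : ∀ t ∈ Set.Ioo lo hi, HasDerivAt b (b' t) t)
    (hamem : ∀ t ∈ Set.Ioo lo hi, a t ∈ Set.Ioo (0:ℝ) 1)
    (hbmem : ∀ t ∈ Set.Ioo lo hi, b t ∈ Set.Ioo (0:ℝ) 1)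
    (hfocA : ∀ t ∈ Set.Ioo lo hi, fFun lam lam' c' t (a t) = hFun lam t dB (b t))
    (hfocB : ∀ t ∈ Set.Ioo lo hi, fFun lam lam' c' dB (b t) = hFun lam dB t (a t)) :
    ∀ t ∈ Set.Ioo lo hi, 0 < a' t ∧ b' t < 0 := by
  intro t ht
  have hlamMono : StrictMonoOn lam (Icc 0 1) :=
    strictMonoOn_of_hasDerivWithinAt_pos (convex_Icc 0 1)
      (fun x hx => (hlamDeriv x hx).continuousAt.continuousWithinAt)
      (fun x hx => (hlamDeriv x (interior_subset hx)).hasDerivWithinAt)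
      (fun x hx => hlam'pos x (interior_subset hx))
  have hlamPos : ∀ x ∈ Ioo (0 : ℝ) 1, 0 < lam x := fun x hx =>
    hlam0 ▸ hlamMono (left_mem_Icc.2 zero_le_one) (Ioo_subset_Icc_self hx) hx.1
  have hratio : ∀ x ∈ Ioo (0 : ℝ) 1, ∃ q, HasDerivAt (fun α => c' α / lam' α) q x ∧ 0 ≤ q :=
    fun x hx => exists_hasDerivAt_div_nonneg (Ioo_mem_nhds hx.1 hx.2)
      (hc'Deriv x (Ioo_subset_Ico_self hx)) (hlam'Deriv x (Ioo_subset_Icc_self hx))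
      ((StrictMonoOn.monotoneOn hc'strictMono).mono Ioo_subset_Ico_self)
      (AntitoneOn.mono (fun x hx y hy => hlam'anti x hx y hy) Ioo_subset_Icc_self)
      (hc'nonneg x (Ioo_subset_Ico_self hx)) (hlam'pos x (Ioo_subset_Icc_self hx))
  have haI := hamem t ht
  have hbI := hbmem t ht
  obtain ⟨ga, hgA, hga⟩ := hratio _ haI
  obtain ⟨gb, hgB, hgb⟩ := hratio _ hbI
  exact comparative_statics_of_foc (hsub ht) hdB (hlamDeriv _ (Ioo_subset_Icc_self haI))
    (hlamDeriv _ (Ioo_subset_Icc_self hbI)) hgA hgB (hda t ht) (hdb t ht)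
    (eventually_of_mem (Ioo_mem_nhds ht.1 ht.2) hfocA)
    (eventually_of_mem (Ioo_mem_nhds ht.1 ht.2) hfocB)
    (hlam'pos _ (Ioo_subset_Icc_self haI)) (hlam'pos _ (Ioo_subset_Icc_self hbI)) hga hgb
    (div_nonneg (hc'nonneg _ (Ioo_subset_Ico_self haI)) (hlam'pos _ (Ioo_subset_Icc_self haI)).le)
    (hlamPos _ haI) (hlamPos _ hbI)

/-- Proposition 3(1): BPR comparative statics, aligned preferences.
Along a differentiable family of interior equilibria parameterized by Alice's diversity
`d_A = t > 0` with fixed `d_B > 0`, Alice's revelation strictly increases and Bob's strictly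
decreases in `t`. -/
theorem BPR_comparative_statics_aligned
    (lam lam' c c' : ℝ → ℝ)
    (hlamDeriv : ∀ α ∈ Set.Icc (0:ℝ) 1, HasDerivAt lam (lam' α) α)
    (hlam'Cont : ContinuousOn lam' (Set.Icc (0:ℝ) 1))
    (hlam0 : lam 0 = 0) (hlam1 : lam 1 = 1)
    (hlam'pos : ∀ α ∈ Set.Icc (0:ℝ) 1, 0 < lam' α)
    (hlam'anti : ∀ x ∈ Set.Icc (0:ℝ) 1, ∀ y ∈ Set.Icc (0:ℝ) 1, x ≤ y → lam' y ≤ lam' x)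
    (hcDeriv : ∀ α ∈ Set.Ico (0:ℝ) 1, HasDerivAt c (c' α) α)
    (hc'Cont : ContinuousOn c' (Set.Ico (0:ℝ) 1))
    (hc0 : c 0 = 0)
    (hc'nonneg : ∀ α ∈ Set.Ico (0:ℝ) 1, 0 ≤ c' α)
    (hc'strictMono : ∀ x ∈ Set.Ico (0:ℝ) 1, ∀ y ∈ Set.Ico (0:ℝ) 1, x < y → c' x < c' y)
    (hc'top : Filter.Tendsto c' (nhdsWithin 1 (Set.Iio 1)) Filter.atTop)
    (lam'' c'' : ℝ → ℝ)
    (hlam'Deriv : ∀ α ∈ Set.Icc (0:ℝ) 1, HasDerivAt lam' (lam'' α) α)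
    (hlam''Cont : ContinuousOn lam'' (Set.Icc (0:ℝ) 1))
    (hc'Deriv : ∀ α ∈ Set.Ico (0:ℝ) 1, HasDerivAt c' (c'' α) α)
    (hc''Cont : ContinuousOn c'' (Set.Ico (0:ℝ) 1))
    (dB : ℝ) (hdB : 0 < dB)
    (lo hi : ℝ) (hsub : Set.Ioo lo hi ⊆ Set.Ioi (0:ℝ))
    (a a' b b' : ℝ → ℝ)
    (hda : ∀ t ∈ Set.Ioo lo hi, HasDerivAt a (a' t) t)
    (hdb : ∀ t ∈ Set.Ioo lo hi, HasDerivAt b (b' t) t)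
    (hamem : ∀ t ∈ Set.Ioo lo hi, a t ∈ Set.Ioo (0:ℝ) 1)
    (hbmem : ∀ t ∈ Set.Ioo lo hi, b t ∈ Set.Ioo (0:ℝ) 1)
    (hfocA : ∀ t ∈ Set.Ioo lo hi, fFun lam lam' c' t (a t) = hFun lam t dB (b t))
    (hfocB : ∀ t ∈ Set.Ioo lo hi, fFun lam lam' c' dB (b t) = hFun lam dB t (a t)) :
    ∀ t ∈ Set.Ioo lo hi, 0 < a' t ∧ b' t < 0 :=
  BPR_comparative_statics_aligned_general lam lam' c' hlamDeriv hlam0 hlam'pos hlam'anti hc'nonneg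
    hc'strictMono lam'' c'' hlam'Deriv hc'Deriv dB hdB lo hi hsub a a' b b' hda hdb hamem hbmem
    hfocA hfocB
end

section
/- (Proposition 3(2): BPR comparative statics under conflicting preferences.) Assume λ and c are twice continuously differentiable on their domains, fix d_B < 0, and let I ⊆ (0, +∞) be an open interval. Suppose a, b : I → (0,1) are differentiable functions such that for every t ∈ I the profile (a(t), b(t)) is an interior Nash equilibrium for parameters d_A = t and d_B, i.e., λ(a(t)) + (2/t²)·c'(a(t))/λ'(a(t)) = 2 − λ(b(t))·d_B/t and λ(b(t)) + (2/d_B²)·c'(b(t))/λ'(b(t)) = 2 − λ(a(t))·t/d_B for all t ∈ I. Then a'(t) > 0 and b'(t) > 0 on I: with conflicting preferences, each member's equilibrium revelation increases with both members' diversity. -/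
open Set Filter

/-!
Multiplying a first-order condition `fFun = hFun` by `d²` turns it into
`λ(α)·d² + 2·q(α) = 2·d² − λ(β)·e·d` with `q = c'/λ'`, and `q` is nondecreasing because `c' ≥ 0`
increases while `λ' > 0` decreases. Differentiating both conditions in `t` gives a linear system
for `(a', b')` with positive diagonal, off-diagonal entries `λ'(b)·d_B·t` and `λ'(a)·t·d_B` that are
negative exactly because the preferences conflict (`d_B < 0 < t`), positive right-hand sides
`2(2 − λ(a))·t − λ(b)·d_B` and `−λ(a)·d_B`, and nonnegative determinant. Cramer's rule then makes
both derivatives positive.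
-/

open Topology

theorem pos_of_zMatrix_system {p q k l r s x y : ℝ} (hp : 0 < p) (hq : 0 < q) (hk : k ≤ 0)
    (hl : l ≤ 0) (hdet : k * l ≤ p * q) (hr : 0 < r) (hs : 0 < s)
    (hx : p * x + k * y = r) (hy : q * y + l * x = s) : 0 < x ∧ 0 < y := by
  have hDx : (p * q - k * l) * x = q * r - k * s := by linear_combination q * hx - k * hy
  have hDy : (p * q - k * l) * y = p * s - l * r := by linear_combination p * hy - l * hx
  have hx' : 0 < (p * q - k * l) * x := by rw [hDx]; nlinarith
  have hy' : 0 < (p * q - k * l) * y := by rw [hDy]; nlinarith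
  exact ⟨pos_of_mul_pos_right hx' (by linarith), pos_of_mul_pos_right hy' (by linarith)⟩

theorem pos_pos_of_conflicting_foc_system {t dB l'a l'b qa qb la lb x y : ℝ} (ht : 0 < t)
    (hdB : dB < 0) (hl'a : 0 < l'a) (hl'b : 0 < l'b) (hqa : 0 ≤ qa) (hqb : 0 ≤ qb)
    (hla : 0 < la) (hla2 : la < 2) (hlb : 0 ≤ lb)
    (hA : (l'a * t ^ 2 + 2 * qa) * x + l'b * dB * t * y = 2 * (2 - la) * t - lb * dB)
    (hB : (l'b * dB ^ 2 + 2 * qb) * y + l'a * t * dB * x = -(la * dB)) :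
    0 < x ∧ 0 < y := by
  have hdB2 : 0 < dB ^ 2 := sq_pos_of_neg hdB
  refine pos_of_zMatrix_system (by positivity) (by positivity) ?_ ?_ ?_ ?_ ?_ hA hB
  · exact mul_nonpos_of_nonpos_of_nonneg (mul_nonpos_of_nonneg_of_nonpos hl'b.le hdB.le) ht.le
  · exact mul_nonpos_of_nonneg_of_nonpos (by positivity) hdB.le
  · calc l'b * dB * t * (l'a * t * dB) = l'a * t ^ 2 * (l'b * dB ^ 2) := by ring
      _ ≤ _ := by gcongr <;> linarith
  · nlinarith [mul_nonpos_of_nonneg_of_nonpos hlb hdB.le]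
  · nlinarith [mul_pos hla (neg_pos.2 hdB)]

theorem lam_mapsTo_Ioo {lam lam' : ℝ → ℝ} (hderiv : ∀ α ∈ Icc (0:ℝ) 1, HasDerivAt lam (lam' α) α)
    (hpos : ∀ α ∈ Icc (0:ℝ) 1, 0 < lam' α) (h0 : lam 0 = 0) (h1 : lam 1 = 1) :
    MapsTo lam (Ioo 0 1) (Ioo 0 1) := by
  have hmono : StrictMonoOn lam (Icc 0 1) :=
    strictMonoOn_of_hasDerivWithinAt_pos (convex_Icc 0 1)
      (fun α hα => (hderiv α hα).continuousAt.continuousWithinAt)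
      (fun α hα => (hderiv α (interior_subset hα)).hasDerivWithinAt)
      (fun α hα => hpos α (interior_subset hα))
  simpa [h0, h1] using hmono.mapsTo_Ioo

theorem exists_nonneg_hasDerivAt_div_of_monotoneOn {f g : ℝ → ℝ} {s : Set ℝ} {f' g' x : ℝ}
    (hs : IsOpen s) (hx : x ∈ s) (hf : HasDerivAt f f' x) (hg : HasDerivAt g g' x)
    (hfs : MonotoneOn f s) (hgs : AntitoneOn g s) (hf0 : 0 ≤ f x) (hg0 : 0 < g x) :
    ∃ q', 0 ≤ q' ∧ HasDerivAt (fun y => f y / g y) q' x := by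
  have hf' : 0 ≤ f' := hf.hasDerivWithinAt.nonneg_of_monotoneOn (hs.preperfect x hx) hfs
  have hg' : g' ≤ 0 := hg.hasDerivWithinAt.nonpos_of_antitoneOn (hs.preperfect x hx) hgs
  exact ⟨_, div_nonneg (by nlinarith) (by positivity), hf.div hg hg0.ne'⟩

theorem fFun_eq_hFun_iff {lam lam' c' : ℝ → ℝ} {d e α β : ℝ} (hd : d ≠ 0) :
    fFun lam lam' c' d α = hFun lam d e β ↔
      lam α * d ^ 2 + 2 * (c' α / lam' α) = 2 * d ^ 2 - lam β * e * d := by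
  unfold fFun hFun
  constructor <;> intro h
  · field_simp at h; linear_combination h
  · field_simp; linear_combination h

theorem foc_implicit_deriv_eq {lam lam' c' α β d e : ℝ → ℝ} {t α' β' d' e' q' : ℝ}
    (hα : HasDerivAt α α' t) (hβ : HasDerivAt β β' t) (hd : HasDerivAt d d' t)
    (he : HasDerivAt e e' t) (hlamα : HasDerivAt lam (lam' (α t)) (α t))
    (hlamβ : HasDerivAt lam (lam' (β t)) (β t)) (hq : HasDerivAt (fun u => c' u / lam' u) q' (α t))
    (hfoc : ∀ᶠ s in 𝓝 t, d s ≠ 0 ∧ fFun lam lam' c' (d s) (α s) = hFun lam (d s) (e s) (β s)) :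
    (lam' (α t) * d t ^ 2 + 2 * q') * α' + lam' (β t) * e t * d t * β' =
      2 * (2 - lam (α t)) * d t * d' - lam (β t) * (e' * d t + e t * d') := by
  have hlhs := ((hlamα.comp t hα).mul (hd.pow 2)).add ((hq.comp t hα).const_mul 2)
  have hrhs := ((hd.pow 2).const_mul 2).sub (((hlamβ.comp t hβ).mul he).mul hd)
  have heq : (fun s => lam (α s) * d s ^ 2 + 2 * (c' (α s) / lam' (α s))) =ᶠ[𝓝 t]
      fun s => 2 * d s ^ 2 - lam (β s) * e s * d s := by
    filter_upwards [hfoc] with s ⟨hds, hs⟩ using (fFun_eq_hFun_iff hds).1 hs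
  have := (hlhs.congr_of_eventuallyEq heq.symm).unique hrhs
  simp only [Function.comp_apply, Pi.mul_apply, Pi.pow_apply] at this
  linear_combination this

theorem BPR_comparative_statics_conflicting_general
    (lam lam' c' : ℝ → ℝ)
    (hlamDeriv : ∀ α ∈ Set.Icc (0:ℝ) 1, HasDerivAt lam (lam' α) α)
    (hlam0 : lam 0 = 0) (hlam1 : lam 1 = 1)
    (hlam'pos : ∀ α ∈ Set.Icc (0:ℝ) 1, 0 < lam' α)
    (hlam'anti : ∀ x ∈ Set.Icc (0:ℝ) 1, ∀ y ∈ Set.Icc (0:ℝ) 1, x ≤ y → lam' y ≤ lam' x)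
    (hc'nonneg : ∀ α ∈ Set.Ico (0:ℝ) 1, 0 ≤ c' α)
    (hc'strictMono : ∀ x ∈ Set.Ico (0:ℝ) 1, ∀ y ∈ Set.Ico (0:ℝ) 1, x < y → c' x < c' y)
    (lam'' c'' : ℝ → ℝ)
    (hlam'Deriv : ∀ α ∈ Set.Icc (0:ℝ) 1, HasDerivAt lam' (lam'' α) α)
    (hc'Deriv : ∀ α ∈ Set.Ico (0:ℝ) 1, HasDerivAt c' (c'' α) α)
    (dB : ℝ) (hdB : dB < 0)
    (lo hi : ℝ) (hsub : Set.Ioo lo hi ⊆ Set.Ioi (0:ℝ))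
    (a a' b b' : ℝ → ℝ)
    (hda : ∀ t ∈ Set.Ioo lo hi, HasDerivAt a (a' t) t)
    (hdb : ∀ t ∈ Set.Ioo lo hi, HasDerivAt b (b' t) t)
    (hamem : ∀ t ∈ Set.Ioo lo hi, a t ∈ Set.Ioo (0:ℝ) 1)
    (hbmem : ∀ t ∈ Set.Ioo lo hi, b t ∈ Set.Ioo (0:ℝ) 1)
    (hfocA : ∀ t ∈ Set.Ioo lo hi, fFun lam lam' c' t (a t) = hFun lam t dB (b t))
    (hfocB : ∀ t ∈ Set.Ioo lo hi, fFun lam lam' c' dB (b t) = hFun lam dB t (a t)) :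
    ∀ t ∈ Set.Ioo lo hi, 0 < a' t ∧ 0 < b' t := by
  have hc'mono : MonotoneOn c' (Ioo 0 1) :=
    StrictMonoOn.monotoneOn fun x hx y hy =>
      hc'strictMono x (Ioo_subset_Ico_self hx) y (Ioo_subset_Ico_self hy)
  have hlam'anti' : AntitoneOn lam' (Ioo 0 1) :=
    fun x hx y hy => hlam'anti x (Ioo_subset_Icc_self hx) y (Ioo_subset_Icc_self hy)
  have hquot : ∀ α ∈ Ioo (0:ℝ) 1, ∃ q', 0 ≤ q' ∧ HasDerivAt (fun u => c' u / lam' u) q' α :=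
    fun α hα => exists_nonneg_hasDerivAt_div_of_monotoneOn isOpen_Ioo hα
      (hc'Deriv α (Ioo_subset_Ico_self hα)) (hlam'Deriv α (Ioo_subset_Icc_self hα)) hc'mono
      hlam'anti' (hc'nonneg α (Ioo_subset_Ico_self hα)) (hlam'pos α (Ioo_subset_Icc_self hα))
  intro t ht
  have hat := hamem t ht
  have hbt := hbmem t ht
  obtain ⟨qa, hqa, hqa'⟩ := hquot _ hat
  obtain ⟨qb, hqb, hqb'⟩ := hquot _ hbt
  have hIoo : Ioo lo hi ∈ 𝓝 t := isOpen_Ioo.mem_nhds ht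
  have hA := foc_implicit_deriv_eq (hda t ht) (hdb t ht) (hasDerivAt_id' t)
    (hasDerivAt_const t dB) (hlamDeriv _ (Ioo_subset_Icc_self hat))
    (hlamDeriv _ (Ioo_subset_Icc_self hbt)) hqa'
    (by filter_upwards [hIoo] with s hs using ⟨(hsub hs).ne', hfocA s hs⟩)
  have hB := foc_implicit_deriv_eq (hdb t ht) (hda t ht) (hasDerivAt_const t dB)
    (hasDerivAt_id' t) (hlamDeriv _ (Ioo_subset_Icc_self hbt))
    (hlamDeriv _ (Ioo_subset_Icc_self hat)) hqb'
    (by filter_upwards [hIoo] with s hs using ⟨hdB.ne, hfocB s hs⟩)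
  have hlama := lam_mapsTo_Ioo hlamDeriv hlam'pos hlam0 hlam1 hat
  have hlamb := lam_mapsTo_Ioo hlamDeriv hlam'pos hlam0 hlam1 hbt
  exact pos_pos_of_conflicting_foc_system (hsub ht) hdB (hlam'pos _ (Ioo_subset_Icc_self hat))
    (hlam'pos _ (Ioo_subset_Icc_self hbt)) hqa hqb hlama.1 (by linarith [hlama.2]) hlamb.1.le
    (by linear_combination hA) (by linear_combination hB)

/-- Proposition 3(2): BPR comparative statics, conflicting preferences.
Along a differentiable family of interior equilibria parameterized by Alice's diversity
`d_A = t > 0` with fixed `d_B < 0`, both members' revelations strictly increase in `t`. -/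
theorem BPR_comparative_statics_conflicting
    (lam lam' c c' : ℝ → ℝ)
    (hlamDeriv : ∀ α ∈ Set.Icc (0:ℝ) 1, HasDerivAt lam (lam' α) α)
    (hlam'Cont : ContinuousOn lam' (Set.Icc (0:ℝ) 1))
    (hlam0 : lam 0 = 0) (hlam1 : lam 1 = 1)
    (hlam'pos : ∀ α ∈ Set.Icc (0:ℝ) 1, 0 < lam' α)
    (hlam'anti : ∀ x ∈ Set.Icc (0:ℝ) 1, ∀ y ∈ Set.Icc (0:ℝ) 1, x ≤ y → lam' y ≤ lam' x)
    (hcDeriv : ∀ α ∈ Set.Ico (0:ℝ) 1, HasDerivAt c (c' α) α)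
    (hc'Cont : ContinuousOn c' (Set.Ico (0:ℝ) 1))
    (hc0 : c 0 = 0)
    (hc'nonneg : ∀ α ∈ Set.Ico (0:ℝ) 1, 0 ≤ c' α)
    (hc'strictMono : ∀ x ∈ Set.Ico (0:ℝ) 1, ∀ y ∈ Set.Ico (0:ℝ) 1, x < y → c' x < c' y)
    (hc'top : Filter.Tendsto c' (nhdsWithin 1 (Set.Iio 1)) Filter.atTop)
    (lam'' c'' : ℝ → ℝ)
    (hlam'Deriv : ∀ α ∈ Set.Icc (0:ℝ) 1, HasDerivAt lam' (lam'' α) α)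
    (hlam''Cont : ContinuousOn lam'' (Set.Icc (0:ℝ) 1))
    (hc'Deriv : ∀ α ∈ Set.Ico (0:ℝ) 1, HasDerivAt c' (c'' α) α)
    (hc''Cont : ContinuousOn c'' (Set.Ico (0:ℝ) 1))
    (dB : ℝ) (hdB : dB < 0)
    (lo hi : ℝ) (hsub : Set.Ioo lo hi ⊆ Set.Ioi (0:ℝ))
    (a a' b b' : ℝ → ℝ)
    (hda : ∀ t ∈ Set.Ioo lo hi, HasDerivAt a (a' t) t)
    (hdb : ∀ t ∈ Set.Ioo lo hi, HasDerivAt b (b' t) t)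
    (hamem : ∀ t ∈ Set.Ioo lo hi, a t ∈ Set.Ioo (0:ℝ) 1)
    (hbmem : ∀ t ∈ Set.Ioo lo hi, b t ∈ Set.Ioo (0:ℝ) 1)
    (hfocA : ∀ t ∈ Set.Ioo lo hi, fFun lam lam' c' t (a t) = hFun lam t dB (b t))
    (hfocB : ∀ t ∈ Set.Ioo lo hi, fFun lam lam' c' dB (b t) = hFun lam dB t (a t)) :
    ∀ t ∈ Set.Ioo lo hi, 0 < a' t ∧ 0 < b' t :=
  BPR_comparative_statics_conflicting_general lam lam' c' hlamDeriv hlam0 hlam1 hlam'pos hlam'anti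
    hc'nonneg hc'strictMono lam'' c'' hlam'Deriv hc'Deriv dB hdB lo hi hsub a a' b b' hda hdb hamem
    hbmem hfocA hfocB
end

section
/- (Proposition 3(3): conflicting members reveal more than aligned members.) Let d_A > 0 and d_B > 0. Suppose (a, b) ∈ (0,1)² is an interior Nash equilibrium for the conflicting parameters (d_A, −d_B), and (a', b') ∈ (0,1)² is an interior Nash equilibrium for the aligned parameters (d_A, d_B). Then a ≥ a' and b ≥ b', and both inequalities are strict whenever b > 0 and a > 0 respectively; i.e., for equal magnitudes of the preference deviation ratio, members with conflicting preferences reveal more information at equilibrium than members with aligned preferences. -/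
open Set Filter

/-- Proposition 3(3): conflicting members reveal more than aligned ones.
Let `d_A, d_B > 0`. If `(a, b)` is an interior equilibrium for the conflicting parameters
`(d_A, −d_B)` and `(a', b')` one for the aligned parameters `(d_A, d_B)`, then `a ≥ a'` and
`b ≥ b'`, strictly whenever `b > 0` resp. `a > 0`. -/
theorem conflicting_reveal_more_than_aligned
    (lam lam' c c' : ℝ → ℝ)
    (hlamDeriv : ∀ α ∈ Set.Icc (0:ℝ) 1, HasDerivAt lam (lam' α) α)
    (hlam'Cont : ContinuousOn lam' (Set.Icc (0:ℝ) 1))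
    (hlam0 : lam 0 = 0) (hlam1 : lam 1 = 1)
    (hlam'pos : ∀ α ∈ Set.Icc (0:ℝ) 1, 0 < lam' α)
    (hlam'anti : ∀ x ∈ Set.Icc (0:ℝ) 1, ∀ y ∈ Set.Icc (0:ℝ) 1, x ≤ y → lam' y ≤ lam' x)
    (hcDeriv : ∀ α ∈ Set.Ico (0:ℝ) 1, HasDerivAt c (c' α) α)
    (hc'Cont : ContinuousOn c' (Set.Ico (0:ℝ) 1))
    (hc0 : c 0 = 0)
    (hc'nonneg : ∀ α ∈ Set.Ico (0:ℝ) 1, 0 ≤ c' α)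
    (hc'strictMono : ∀ x ∈ Set.Ico (0:ℝ) 1, ∀ y ∈ Set.Ico (0:ℝ) 1, x < y → c' x < c' y)
    (hc'top : Filter.Tendsto c' (nhdsWithin 1 (Set.Iio 1)) Filter.atTop)
    (dA dB : ℝ) (hdA : 0 < dA) (hdB : 0 < dB)
    (a b a2 b2 : ℝ)
    (haC : a ∈ Set.Ioo (0:ℝ) 1) (hbC : b ∈ Set.Ioo (0:ℝ) 1)
    (hfocAC : fFun lam lam' c' dA a = hFun lam dA (-dB) b)
    (hfocBC : fFun lam lam' c' (-dB) b = hFun lam (-dB) dA a)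
    (haL : a2 ∈ Set.Ioo (0:ℝ) 1) (hbL : b2 ∈ Set.Ioo (0:ℝ) 1)
    (hfocAL : fFun lam lam' c' dA a2 = hFun lam dA dB b2)
    (hfocBL : fFun lam lam' c' dB b2 = hFun lam dB dA a2) :
    a2 ≤ a ∧ b2 ≤ b ∧ (0 < b → a2 < a) ∧ (0 < a → b2 < b) := by
  have hIooIcc : Set.Ioo (0:ℝ) 1 ⊆ Set.Icc 0 1 := Set.Ioo_subset_Icc_self
  have hIooIco : Set.Ioo (0:ℝ) 1 ⊆ Set.Ico 0 1 := Set.Ioo_subset_Ico_self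
  -- lam is strictly monotone on [0,1]
  have hlamMono : StrictMonoOn lam (Set.Icc (0:ℝ) 1) := by
    apply strictMonoOn_of_deriv_pos (convex_Icc 0 1)
    · exact fun x hx => (hlamDeriv x hx).continuousAt.continuousWithinAt
    · intro x hx
      rw [interior_Icc] at hx
      rw [(hlamDeriv x (hIooIcc hx)).deriv]
      exact hlam'pos x (hIooIcc hx)
  have hlam_pos : ∀ x ∈ Set.Ioo (0:ℝ) 1, 0 < lam x := by
    intro x hx
    have := hlamMono (Set.left_mem_Icc.mpr zero_le_one) (hIooIcc hx) hx.1
    simpa [hlam0] using this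
  -- fFun is strictly monotone on (0,1) for nonzero d
  have hfMono : ∀ d : ℝ, d ≠ 0 → StrictMonoOn (fFun lam lam' c' d) (Set.Ioo (0:ℝ) 1) := by
    intro d hd x hx y hy hxy
    have hd2 : (0:ℝ) < d ^ 2 := by positivity
    have h1 : lam x < lam y := hlamMono (hIooIcc hx) (hIooIcc hy) hxy
    have h2 : c' x / lam' x ≤ c' y / lam' y := by
      apply div_le_div₀ (hc'nonneg y (hIooIco hy))
        (le_of_lt (hc'strictMono x (hIooIco hx) y (hIooIco hy) hxy))
        (hlam'pos y (hIooIcc hy))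
        (hlam'anti x (hIooIcc hx) y (hIooIcc hy) hxy.le)
    have hk : (0:ℝ) < 2 / d ^ 2 := by positivity
    unfold fFun
    nlinarith
  have hlb : 0 < lam b := hlam_pos b hbC
  have hlb2 : 0 < lam b2 := hlam_pos b2 hbL
  have hla : 0 < lam a := hlam_pos a haC
  have hla2 : 0 < lam a2 := hlam_pos a2 haL
  -- compare f-values for Alice
  have hfa : fFun lam lam' c' dA a2 < fFun lam lam' c' dA a := by
    rw [hfocAC, hfocAL]
    unfold hFun
    have hr : 0 < lam b * dB / dA := by positivity
    have hr2 : 0 < lam b2 * dB / dA := by positivity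
    have : lam b * (-dB) / dA = -(lam b * dB / dA) := by ring
    rw [this]
    linarith
  have haa : a2 < a := ((hfMono dA hdA.ne').lt_iff_lt haL haC).mp hfa
  -- compare f-values for Bob: note (-dB)^2 = dB^2
  have hfsym : fFun lam lam' c' (-dB) b = fFun lam lam' c' dB b := by
    unfold fFun; rw [neg_pow]; norm_num
  have hfb : fFun lam lam' c' dB b2 < fFun lam lam' c' dB b := by
    rw [← hfsym, hfocBC, hfocBL]
    unfold hFun
    have hr : 0 < lam a * dA / dB := by positivity
    have hr2 : 0 < lam a2 * dA / dB := by positivity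
    have : lam a * dA / (-dB) = -(lam a * dA / dB) := by ring
    rw [this]
    linarith
  have hbb : b2 < b := ((hfMono dB hdB.ne').lt_iff_lt hbL hbC).mp hfb
  exact ⟨haa.le, hbb.le, fun _ => haa, fun _ => hbb⟩
end
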